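/- arXiv:2603.21492 — 3 statements merged into one kernel-verified Lean document; each statement's English description precedes it below -/
import Mathlib

section
/- Let the set function f : 2^V → ℝ≥0 be monotone, α-weakly DR-submodular for some α ∈ (0,1], with f(∅) = 0, and let w(z) = e^{α(z−1)}. If a point x = (p_1^a,…,p_K^a) ∈ ∏_{k=1}^K Δ_{n_k} is a stationary point of the auxiliary objective, i.e. ⟨ y − x, ∫_0^1 w(z)·∇F(z·x) dz ⟩ ≤ 0 for all y ∈ ∏_{k=1}^K Δ_{n_k}, then F(x) ≥ (1 − e^{−α})·f(S) for every feasible subset S ⊆ V. -/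
/-!
Write `F` for the multinoulli extension and `y = Σ_k (1/B_k)·1_{S∩V_k}`. For every `x'` in the
product of simplices, `⟨y, ∇F(x')⟩ ≥ α (f(S) - F(x'))`: the partial derivative `∂F/∂x_i` is the sum,
over the `B_k` slots of the community of `i`, of the expected marginal gain of `i` over the set
drawn by the other slots, and weak DR-submodularity compares this with the gains that telescope
along an enumeration of `S` to `f(S ∪ ·) - f(·)`. Since `⟨x, ∇F(z·x)⟩ = d/dz F(z·x)`, the weight
`w(z) = e^{α(z-1)}` turns the integrand of the stationarity condition at `y` into at least
`d/dz [w(z) (f(S) - F(z·x))]`, so `0 ≥ (1 - e^{-α}) f(S) - F(x) + e^{-α} F(0)` with `F(0) = f(∅)`.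
-/

open Finset

noncomputable section

namespace Multinoulli

variable {K : ℕ}

/-- An element of the ground set `V`: a community index `k` together with the
index `m` of the element `v_k^m` inside its community `V_k`. -/
abbrev Elem (n : Fin K → ℕ) := Σ k : Fin K, Fin (n k)

/-- A sampling slot: a community `k` together with a trial index `b ∈ {1,…,B_k}`. -/
abbrev Slot (B : Fin K → ℕ) := Σ k : Fin K, Fin (B k)

/-- A joint outcome of all the independent multinoulli trials; `none` encodes a
draw of `∅`, which contributes no element. -/
abbrev Choice (n B : Fin K → ℕ) := ∀ s : Slot B, Option (Fin (n s.1))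

/-- The probability that `Multi(p_k)` (the `k`-th block of `x`) assigns to a given
outcome: `x ⟨k,m⟩` for the element `v_k^m` and `1 - Σ_m x ⟨k,m⟩` for `∅`. -/
def prob (n : Fin K → ℕ) (x : Elem n → ℝ) (k : Fin K) : Option (Fin (n k)) → ℝ
  | some m => x ⟨k, m⟩
  | none => 1 - ∑ m : Fin (n k), x ⟨k, m⟩

/-- The probability of the joint outcome `e` (all trials are mutually independent). -/
def jointProb (n B : Fin K → ℕ) (x : Elem n → ℝ) (e : Choice n B) : ℝ :=
  ∏ s : Slot B, prob n x s.1 (e s)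

/-- The subset of the ground set selected by the trials whose slot lies in `A`
(a draw of `∅` contributes no element to the union). -/
def chosen (n B : Fin K → ℕ) (e : Choice n B) (A : Finset (Slot B)) : Finset (Elem n) :=
  A.biUnion fun s => ((e s).map fun m => (⟨s.1, m⟩ : Elem n)).toFinset

/-- The Multinoulli Extension `F` of the set function `f`:
`F(x) = E[f(∪_{k,b} {e_k^b})]` for mutually independent `e_k^b ∼ Multi(p_k)`. -/
def ME (n B : Fin K → ℕ) (f : Finset (Elem n) → ℝ) (x : Elem n → ℝ) : ℝ :=
  ∑ e : Choice n B, f (chosen n B e Finset.univ) * jointProb n B x e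

/-- The first-order partial derivative `∂G/∂x_i` at `x`. -/
def pderiv (n : Fin K → ℕ) (G : (Elem n → ℝ) → ℝ) (i : Elem n) (x : Elem n → ℝ) : ℝ :=
  deriv (fun t => G (Function.update x i t)) (x i)

/-- The gradient `∇G(x)`. -/
def grad (n : Fin K → ℕ) (G : (Elem n → ℝ) → ℝ) (x : Elem n → ℝ) : Elem n → ℝ :=
  fun i => pderiv n G i x

/-- The second-order partial derivative `∂²G/∂x_i∂x_j` at `x`. -/
def pderiv2 (n : Fin K → ℕ) (G : (Elem n → ℝ) → ℝ) (i j : Elem n) (x : Elem n → ℝ) : ℝ :=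
  pderiv n (fun y => pderiv n G j y) i x

/-- The Euclidean inner product on `∏_k ℝ^{n_k}`. -/
def inner' (n : Fin K → ℕ) (u v : Elem n → ℝ) : ℝ := ∑ i : Elem n, u i * v i

/-- Membership in the product of simplices `∏_{k=1}^K Δ_{n_k}`. -/
def InSimplex (n : Fin K → ℕ) (x : Elem n → ℝ) : Prop :=
  (∀ i, 0 ≤ x i) ∧ ∀ k : Fin K, ∑ m : Fin (n k), x ⟨k, m⟩ ≤ 1

/-- Feasibility for the partition constraint: `|S ∩ V_k| ≤ B_k` for all `k`. -/
def Feasible (n B : Fin K → ℕ) (S : Finset (Elem n)) : Prop :=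
  ∀ k : Fin K, (S.filter fun i => i.1 = k).card ≤ B k

/-- Monotonicity of a set function. -/
def MonotoneSet (n : Fin K → ℕ) (f : Finset (Elem n) → ℝ) : Prop :=
  ∀ A B : Finset (Elem n), A ⊆ B → f A ≤ f B

/-- The marginal contribution `f(v|A) = f(A ∪ {v}) - f(A)`. -/
def marg (n : Fin K → ℕ) (f : Finset (Elem n) → ℝ) (v : Elem n) (A : Finset (Elem n)) : ℝ :=
  f (insert v A) - f A

/-- `α`-weak DR-submodularity: `f(v|A) ≥ α·f(v|B)` for all `A ⊆ B` and `v ∉ B`. -/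
def WeaklyDR (n : Fin K → ℕ) (f : Finset (Elem n) → ℝ) (α : ℝ) : Prop :=
  ∀ A B : Finset (Elem n), A ⊆ B → ∀ v, v ∉ B → α * marg n f v B ≤ marg n f v A

/-- `γ`-weak submodularity from below. -/
def WeaklyBelow (n : Fin K → ℕ) (f : Finset (Elem n) → ℝ) (γ : ℝ) : Prop :=
  ∀ A B : Finset (Elem n), A ⊆ B → γ * (f B - f A) ≤ ∑ v ∈ B \ A, marg n f v A

/-- `β`-weak submodularity from above. -/
def WeaklyAbove (n : Fin K → ℕ) (f : Finset (Elem n) → ℝ) (β : ℝ) : Prop :=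
  ∀ A B : Finset (Elem n), A ⊆ B → ∑ v ∈ B \ A, marg n f v (B.erase v) ≤ β * (f B - f A)

/-- The scaled indicator vector `Σ_{k=1}^K (1/B_k)·1_{S∩V_k}`. -/
def indVec (n B : Fin K → ℕ) (S : Finset (Elem n)) : Elem n → ℝ :=
  fun i => if i ∈ S then ((B i.1 : ℝ))⁻¹ else 0


/-- The (coordinatewise) auxiliary integral `∫_0^1 w(z)·∇F(z·x) dz`, where `z·x`
denotes coordinatewise scaling of `x` by `z`. -/
def auxGrad (n B : Fin K → ℕ) (f : Finset (Elem n) → ℝ) (w : ℝ → ℝ) (x : Elem n → ℝ) :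
    Elem n → ℝ :=
  fun i => ∫ z in (0:ℝ)..1, w z * grad n (ME n B f) (fun j => z * x j) i

section Probabilities

variable {n B : Fin K → ℕ}

lemma sum_prob (x : Elem n → ℝ) (k : Fin K) : ∑ v, prob n x k v = 1 := by
  simp [Fintype.sum_option, prob]

lemma prob_nonneg {x : Elem n → ℝ} (hx : InSimplex n x) (k : Fin K) :
    ∀ v, 0 ≤ prob n x k v
  | none => sub_nonneg.2 (hx.2 k)
  | some _ => hx.1 _

lemma jointProb_nonneg {x : Elem n → ℝ} (hx : InSimplex n x) (e : Choice n B) :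
    0 ≤ jointProb n B x e :=
  prod_nonneg fun s _ => prob_nonneg hx s.1 (e s)

lemma sum_jointProb (x : Elem n → ℝ) : ∑ e : Choice n B, jointProb n B x e = 1 := by
  simp only [jointProb, ← Fintype.prod_sum, sum_prob, prod_const_one]

lemma ME_zero (f : Finset (Elem n) → ℝ) : ME n B f 0 = f ∅ := by
  have hnone : ∀ e : Choice n B, e ≠ (fun _ => none) → jointProb n B 0 e = 0 := by
    intro e he
    obtain ⟨s, hs⟩ := Function.ne_iff.1 he
    obtain ⟨m, hm⟩ := Option.ne_none_iff_exists'.1 hs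
    exact prod_eq_zero (mem_univ s) (by simp [hm, prob])
  rw [ME, sum_eq_single _ (fun e _ he => by rw [hnone e he, mul_zero]) (by simp)]
  have hempty : chosen n B (fun _ => none) univ = ∅ := by ext; simp [chosen]
  simp [hempty, jointProb, prob]

lemma InSimplex.smul {x : Elem n → ℝ} (hx : InSimplex n x) {z : ℝ} (h0 : 0 ≤ z)
    (h1 : z ≤ 1) :
    InSimplex n (z • x) := by
  refine ⟨fun i => mul_nonneg h0 (hx.1 i), fun k => ?_⟩
  simp only [Pi.smul_apply, smul_eq_mul, ← mul_sum]
  exact mul_le_one₀ h1 (sum_nonneg fun m _ => hx.1 _) (hx.2 k)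

lemma Feasible.pos {S : Finset (Elem n)} (hS : Feasible n B S) {i : Elem n} (hi : i ∈ S) :
    0 < B i.1 :=
  (hS i.1).trans_lt' (card_pos.2 ⟨i, mem_filter.2 ⟨hi, rfl⟩⟩)

lemma indVec_inSimplex {S : Finset (Elem n)} (hS : Feasible n B S) :
    InSimplex n (indVec n B S) := by
  refine ⟨fun i => by unfold indVec; positivity, fun k => ?_⟩
  have hcard : #{m : Fin (n k) | (⟨k, m⟩ : Elem n) ∈ S} ≤ B k :=
    (card_le_card_of_injOn (fun m => (⟨k, m⟩ : Elem n)) (fun m hm => by simp_all)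
      (fun _ _ _ _ h => eq_of_heq (Sigma.mk.inj_iff.1 h).2)).trans (hS k)
  simp only [indVec, ← sum_filter, sum_const, nsmul_eq_mul, ← div_eq_mul_inv]
  exact div_le_one_of_le₀ (by exact_mod_cast hcard) (Nat.cast_nonneg _)

end Probabilities

section SlotDecomposition

variable (n : Fin K → ℕ) {B : Fin K → ℕ}

abbrev RestChoice (s : Slot B) := ∀ j : {j : Slot B // j ≠ s}, Option (Fin (n j.1.1))

def glue (s : Slot B) (v : Option (Fin (n s.1))) (r : RestChoice n s) : Choice n B :=
  (Equiv.piSplitAt s fun j : Slot B => Option (Fin (n j.1))).symm (v, r)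

variable {n}

@[simp]
lemma glue_self (s : Slot B) (v : Option (Fin (n s.1))) (r : RestChoice n s) :
    glue n s v r s = v := by
  simp [glue]

lemma glue_of_ne {s j : Slot B} (h : j ≠ s) (v : Option (Fin (n s.1))) (r : RestChoice n s) :
    glue n s v r j = r ⟨j, h⟩ := by
  simp [glue, h]

lemma sum_eq_sum_glue (s : Slot B) (g : Choice n B → ℝ) :
    ∑ e, g e = ∑ v, ∑ r : RestChoice n s, g (glue n s v r) := by
  rw [← (Equiv.piSplitAt s fun j : Slot B => Option (Fin (n j.1))).symm.sum_comp g,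
    Fintype.sum_prod_type]
  rfl

def restProb (x : Elem n → ℝ) (s : Slot B) (r : RestChoice n s) : ℝ :=
  ∏ j, prob n x j.1.1 (r j)

lemma restProb_nonneg {x : Elem n → ℝ} (hx : InSimplex n x) (s : Slot B) (r : RestChoice n s) :
    0 ≤ restProb x s r :=
  prod_nonneg fun _ _ => prob_nonneg hx _ _

lemma prod_erase_prob_glue (x : Elem n → ℝ) (s : Slot B) (v : Option (Fin (n s.1)))
    (r : RestChoice n s) :
    ∏ s' ∈ univ.erase s, prob n x s'.1 (glue n s v r s') = restProb x s r := by
  rw [restProb, prod_subtype (univ.erase s) (p := (· ≠ s)) (by simp)]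
  exact Fintype.prod_congr _ _ fun j => by rw [glue_of_ne j.2]

lemma jointProb_glue (x : Elem n → ℝ) (s : Slot B) (v : Option (Fin (n s.1)))
    (r : RestChoice n s) :
    jointProb n B x (glue n s v r) = prob n x s.1 v * restProb x s r := by
  rw [jointProb, ← mul_prod_erase univ _ (mem_univ s), glue_self, prod_erase_prob_glue]

variable (n) in
def restSet (s : Slot B) (r : RestChoice n s) : Finset (Elem n) :=
  chosen n B (glue n s none r) (univ.erase s)

lemma chosen_glue (s : Slot B) (v : Option (Fin (n s.1))) (r : RestChoice n s) :
    chosen n B (glue n s v r) univ = (v.map (⟨s.1, ·⟩)).toFinset ∪ restSet n s r := by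
  rw [chosen, ← insert_erase (mem_univ s), biUnion_insert, glue_self, restSet, chosen]
  congr 1
  exact biUnion_congr rfl fun s' hs' => by
    rw [glue_of_ne (ne_of_mem_erase hs'), glue_of_ne (ne_of_mem_erase hs')]

end SlotDecomposition

section Derivatives

variable (n B : Fin K → ℕ) (f : Finset (Elem n) → ℝ)

/-- `prob n x k v` is affine in `x`; this is its linear part. -/
def dprob (k : Fin K) : Option (Fin (n k)) → (Elem n → ℝ) →ₗ[ℝ] ℝ
  | some m => LinearMap.proj ⟨k, m⟩
  | none => -∑ m, LinearMap.proj ⟨k, m⟩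

def MEDeriv (x : Elem n → ℝ) : (Elem n → ℝ) →ₗ[ℝ] ℝ :=
  ∑ e : Choice n B, f (chosen n B e univ) •
    ∑ s : Slot B, (∏ s' ∈ univ.erase s, prob n x s'.1 (e s')) • dprob n s.1 (e s)

variable {n B}

lemma MEDeriv_apply (x u : Elem n → ℝ) :
    MEDeriv n B f x u = ∑ e : Choice n B, f (chosen n B e univ) *
      ∑ s : Slot B, (∏ s' ∈ univ.erase s, prob n x s'.1 (e s')) * dprob n s.1 (e s) u := by
  simp only [MEDeriv, LinearMap.coe_sum, Finset.sum_apply, LinearMap.smul_apply, smul_eq_mul]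

lemma prob_add_smul (x u : Elem n → ℝ) (t : ℝ) (k : Fin K) :
    ∀ v, prob n (x + t • u) k v = prob n x k v + t * dprob n k v u
  | some m => by simp [prob, dprob]
  | none => by simp [prob, dprob, sum_add_distrib, mul_sum]; ring

@[fun_prop]
lemma continuous_prob (k : Fin K) : ∀ v, Continuous fun x : Elem n → ℝ => prob n x k v
  | some m => by simp only [prob]; fun_prop
  | none => by simp only [prob]; fun_prop

@[fun_prop]
lemma continuous_ME : Continuous (ME n B f) := by
  unfold ME jointProb
  fun_prop

@[fun_prop]
lemma continuous_MEDeriv_apply (u : Elem n → ℝ) : Continuous fun x => MEDeriv n B f x u := by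
  simp only [MEDeriv_apply]
  fun_prop

lemma hasDerivAt_ME_add_smul (x u : Elem n → ℝ) (t : ℝ) :
    HasDerivAt (fun t => ME n B f (x + t • u)) (MEDeriv n B f (x + t • u) u) t := by
  have hprob (k : Fin K) (v : Option (Fin (n k))) :
      HasDerivAt (fun t => prob n (x + t • u) k v) (dprob n k v u) t := by
    simp_rw [prob_add_smul]
    simpa using ((hasDerivAt_id t).mul_const (dprob n k v u)).const_add (prob n x k v)
  rw [MEDeriv_apply]
  exact HasDerivAt.fun_sum fun e _ =>
    (HasDerivAt.fun_finsetProd fun s _ => hprob s.1 (e s)).const_mul _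

lemma hasDerivAt_ME_smul (x : Elem n → ℝ) (z : ℝ) :
    HasDerivAt (fun z : ℝ => ME n B f (z • x)) (MEDeriv n B f (z • x) x) z := by
  simpa using hasDerivAt_ME_add_smul f 0 x z

lemma pderiv_ME (x : Elem n → ℝ) (i : Elem n) :
    pderiv n (ME n B f) i x = MEDeriv n B f x (Pi.single i 1) := by
  have hupdate (t : ℝ) :
      Function.update x i t = Function.update x i 0 + t • Pi.single i 1 := by
    ext j
    rcases eq_or_ne j i with rfl | hj <;> simp [*]
  have h := hasDerivAt_ME_add_smul (B := B) f (Function.update x i 0) (Pi.single i 1) (x i)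
  rw [← hupdate, Function.update_eq_self] at h
  rw [pderiv, funext fun t => congrArg (ME n B f) (hupdate t), h.deriv]

end Derivatives

lemma sum_mul_apply_single {ι : Type*} [Fintype ι] [DecidableEq ι]
    (L : (ι → ℝ) →ₗ[ℝ] ℝ) (u : ι → ℝ) : ∑ i, u i * L (Pi.single i 1) = L u := by
  conv_rhs => rw [← univ_sum_single u, map_sum]
  refine sum_congr rfl fun i _ => ?_
  rw [← smul_eq_mul, ← map_smul, ← Pi.single_smul, smul_eq_mul, mul_one]

lemma sum_telescope_filter_lt {ι κ : Type*} [DecidableEq ι] [LinearOrder κ] {φ : ι → κ}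
    (hφ : Function.Injective φ) (g : Finset ι → ℝ) (A S : Finset ι) :
    ∑ i ∈ S, (g (insert i (A ∪ S.filter (φ · < φ i))) -
        g (A ∪ S.filter (φ · < φ i))) = g (A ∪ S) - g A := by
  induction S using Finset.induction_on_max_value φ with
  | empty => simp
  | insert a S ha hle ih =>
    have hlt : ∀ j ∈ S, φ j < φ a := fun j hj =>
      (hle j hj).lt_of_ne fun h => ha (hφ h ▸ hj)
    have hfilter_a : (insert a S).filter (φ · < φ a) = S := by
      rw [filter_insert, if_neg (lt_irrefl _), filter_true_of_mem hlt]
    have hfilter_S : ∀ i ∈ S, (insert a S).filter (φ · < φ i) = S.filter (φ · < φ i) :=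
      fun i hi => by rw [filter_insert, if_neg (not_lt.2 (hle i hi))]
    rw [sum_insert ha, hfilter_a, sum_congr rfl fun i hi => by rw [hfilter_S i hi], ih,
      union_insert]
    ring

section Marginals

variable {n B : Fin K → ℕ} {f : Finset (Elem n) → ℝ}

lemma marg_nonneg (hmono : MonotoneSet n f) (v : Elem n) (A : Finset (Elem n)) :
    0 ≤ marg n f v A :=
  sub_nonneg.2 (hmono _ _ (subset_insert v A))

lemma WeaklyDR.mul_marg_le {α : ℝ} (hDR : WeaklyDR n f α) (hmono : MonotoneSet n f)
    {A C : Finset (Elem n)} (h : A ⊆ C) (v : Elem n) : α * marg n f v C ≤ marg n f v A := by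
  by_cases hv : v ∈ C
  · rw [marg, insert_eq_of_mem hv, sub_self, mul_zero]
    exact marg_nonneg hmono v A
  · exact hDR A C h v hv

variable (f) in
lemma sum_dprob_single_mul (i : Elem n) (k : Fin K) (R : Finset (Elem n)) :
    ∑ v : Option (Fin (n k)),
        dprob n k v (Pi.single i 1) * f ((v.map (⟨k, ·⟩)).toFinset ∪ R) =
      if k = i.1 then marg n f i R else 0 := by
  obtain ⟨k', m'⟩ := i
  rcases eq_or_ne k k' with rfl | hk
  · simp [Fintype.sum_option, dprob, marg, Pi.single_apply, sub_eq_neg_add]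
  · simp [Fintype.sum_option, dprob, hk]

variable (f) in
lemma MEDeriv_single (x : Elem n → ℝ) (i : Elem n) :
    MEDeriv n B f x (Pi.single i 1) =
      ∑ b : Fin (B i.1), ∑ r : RestChoice n ⟨i.1, b⟩,
        restProb x ⟨i.1, b⟩ r * marg n f i (restSet n ⟨i.1, b⟩ r) := by
  have hslot (s : Slot B) :
      ∑ e : Choice n B, f (chosen n B e univ) *
          ((∏ s' ∈ univ.erase s, prob n x s'.1 (e s')) * dprob n s.1 (e s) (Pi.single i 1)) =
        if s.1 = i.1 then ∑ r : RestChoice n s, restProb x s r * marg n f i (restSet n s r)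
        else 0 := by
    rw [sum_eq_sum_glue s, sum_comm]
    simp only [glue_self, prod_erase_prob_glue, chosen_glue]
    calc _ = ∑ r : RestChoice n s, restProb x s r * ∑ v, dprob n s.1 v (Pi.single i 1) *
          f ((v.map (⟨s.1, ·⟩)).toFinset ∪ restSet n s r) :=
          sum_congr rfl fun r _ => by rw [mul_sum]; exact sum_congr rfl fun v _ => by ring
      _ = _ := by simp_rw [sum_dprob_single_mul]; split_ifs <;> simp
  rw [MEDeriv_apply]
  simp only [mul_sum]
  rw [sum_comm]
  simp only [hslot, Fintype.sum_sigma]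
  rw [sum_eq_single i.1 (fun k _ hk => sum_eq_zero fun b _ => if_neg hk) (by simp)]
  exact sum_congr rfl fun b _ => if_pos rfl

end Marginals

section KeyInequality

variable {n B : Fin K → ℕ} {f : Finset (Elem n) → ℝ} {x : Elem n → ℝ}

lemma mul_sum_jointProb_marg_le {α : ℝ} (hDR : WeaklyDR n f α) (hmono : MonotoneSet n f)
    (hx : InSimplex n x) (s : Slot B) (i : Elem n) (W : Finset (Elem n)) :
    α * ∑ e, jointProb n B x e * marg n f i (chosen n B e univ ∪ W) ≤
      ∑ r : RestChoice n s, restProb x s r * marg n f i (restSet n s r) := by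
  calc α * ∑ e, jointProb n B x e * marg n f i (chosen n B e univ ∪ W)
      = ∑ v, ∑ r : RestChoice n s, (prob n x s.1 v * restProb x s r) *
          (α * marg n f i (chosen n B (glue n s v r) univ ∪ W)) := by
        simp only [mul_sum, sum_eq_sum_glue s, jointProb_glue]
        exact sum_congr rfl fun v _ => sum_congr rfl fun r _ => by ring
    _ ≤ ∑ v, ∑ r : RestChoice n s, (prob n x s.1 v * restProb x s r) *
          marg n f i (restSet n s r) := by
        gcongr with v _ r _
        · exact mul_nonneg (prob_nonneg hx _ _) (restProb_nonneg hx _ _)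
        · refine hDR.mul_marg_le hmono (subset_union_left.trans' ?_) i
          rw [chosen_glue]
          exact subset_union_right
    _ = ∑ r : RestChoice n s, restProb x s r * marg n f i (restSet n s r) := by
        simp_rw [mul_assoc, ← mul_sum, ← sum_mul, sum_prob, one_mul]

lemma sub_ME_le_sum_jointProb_mul (hmono : MonotoneSet n f) (hx : InSimplex n x)
    (S : Finset (Elem n)) :
    f S - ME n B f x ≤
      ∑ e, jointProb n B x e * (f (chosen n B e univ ∪ S) - f (chosen n B e univ)) := by
  calc f S - ME n B f x
      = ∑ e, (jointProb n B x e * f S - f (chosen n B e univ) * jointProb n B x e) := by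
        rw [sum_sub_distrib, ← sum_mul, sum_jointProb, one_mul, ME]
    _ = ∑ e, jointProb n B x e * (f S - f (chosen n B e univ)) :=
        sum_congr rfl fun e _ => by ring
    _ ≤ _ := sum_le_sum fun e _ => mul_le_mul_of_nonneg_left
        (sub_le_sub_right (hmono _ _ subset_union_right) _) (jointProb_nonneg hx e)

theorem mul_sub_ME_le_MEDeriv_indVec (hmono : MonotoneSet n f) {α : ℝ} (hα : 0 ≤ α)
    (hDR : WeaklyDR n f α) {S : Finset (Elem n)} (hS : Feasible n B S) (hx : InSimplex n x) :
    α * (f S - ME n B f x) ≤ MEDeriv n B f x (indVec n B S) := by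
  set φ := Fintype.equivFin (Elem n)
  set E : Elem n → ℝ := fun i =>
    ∑ e, jointProb n B x e * marg n f i (chosen n B e univ ∪ S.filter (φ · < φ i))
  have hE : ∀ i ∈ S, α * E i ≤ (B i.1 : ℝ)⁻¹ * MEDeriv n B f x (Pi.single i 1) := by
    intro i hi
    have hB : (0 : ℝ) < B i.1 := by exact_mod_cast hS.pos hi
    rw [MEDeriv_single, le_inv_mul_iff₀ hB]
    calc (B i.1 : ℝ) * (α * E i) = ∑ _b : Fin (B i.1), α * E i := by simp
      _ ≤ _ := sum_le_sum fun b _ => mul_sum_jointProb_marg_le hDR hmono hx _ i _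
  have htelescope : ∑ i ∈ S, E i =
      ∑ e, jointProb n B x e * (f (chosen n B e univ ∪ S) - f (chosen n B e univ)) := by
    simp only [E, marg]
    rw [sum_comm]
    simp_rw [← mul_sum, sum_telescope_filter_lt φ.injective]
  calc α * (f S - ME n B f x) ≤ ∑ i ∈ S, α * E i := by
        rw [← mul_sum, htelescope]
        exact mul_le_mul_of_nonneg_left (sub_ME_le_sum_jointProb_mul hmono hx S) hα
    _ ≤ ∑ i ∈ S, (B i.1 : ℝ)⁻¹ * MEDeriv n B f x (Pi.single i 1) := sum_le_sum hE
    _ = MEDeriv n B f x (indVec n B S) := by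
        rw [← sum_mul_apply_single]
        simp [indVec, ite_mul]

end KeyInequality

section Integration

lemma integral_exp_mul_sub_deriv (α c : ℝ) {g g' : ℝ → ℝ}
    (hg : ∀ z, HasDerivAt g (g' z) z) (hg' : Continuous g') :
    ∫ z in (0 : ℝ)..1, Real.exp (α * (z - 1)) * (α * (c - g z) - g' z) =
      (1 - Real.exp (-α)) * c - g 1 + Real.exp (-α) * g 0 := by
  have hw (z : ℝ) :
      HasDerivAt (fun z => Real.exp (α * (z - 1))) (Real.exp (α * (z - 1)) * α) z := by
    simpa using (((hasDerivAt_id z).sub_const 1).const_mul α).exp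
  have hprod (z : ℝ) : HasDerivAt (fun z => Real.exp (α * (z - 1)) * (c - g z))
      (Real.exp (α * (z - 1)) * (α * (c - g z) - g' z)) z :=
    ((hw z).fun_mul ((hg z).const_sub c)).congr_deriv (by ring)
  have hcont : Continuous fun z => Real.exp (α * (z - 1)) * (α * (c - g z) - g' z) := by
    have : Continuous g := continuous_iff_continuousAt.2 fun z => (hg z).continuousAt
    fun_prop
  rw [intervalIntegral.integral_eq_sub_of_hasDerivAt (fun z _ => hprod z)
    (hcont.intervalIntegrable 0 1)]
  rw [show α * ((0 : ℝ) - 1) = -α by ring]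
  simp only [sub_self, mul_zero, Real.exp_zero]
  ring

variable {n B : Fin K → ℕ} {f : Finset (Elem n) → ℝ}

lemma inner'_auxGrad {w : ℝ → ℝ} (hw : Continuous w) (u x : Elem n → ℝ) :
    inner' n u (auxGrad n B f w x) = ∫ z in (0 : ℝ)..1, w z * MEDeriv n B f (z • x) u := by
  have hint (i : Elem n) : IntervalIntegrable
      (fun z => u i * (w z * MEDeriv n B f (z • x) (Pi.single i 1))) MeasureTheory.volume 0 1 :=
    (by fun_prop : Continuous _).intervalIntegrable 0 1
  have hsmul (z : ℝ) : (fun j => z * x j) = z • x := rfl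
  simp only [inner', auxGrad, grad, pderiv_ME, hsmul, ← intervalIntegral.integral_const_mul]
  rw [← intervalIntegral.integral_finsetSum fun i _ => hint i]
  refine intervalIntegral.integral_congr fun z _ => ?_
  simp only [← sum_mul_apply_single (MEDeriv n B f (z • x)) u, mul_sum]
  exact sum_congr rfl fun i _ => by ring

end Integration

theorem multinoulliExtension_auxStationary_dr_general {K : ℕ} (n B : Fin K → ℕ)
    (f : Finset (Elem n) → ℝ)
    (hmono : MonotoneSet n f)
    (α : ℝ) (hα0 : 0 < α) (hDR : WeaklyDR n f α)
    (hfempty : f ∅ = 0)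
    (x : Elem n → ℝ) (hx : InSimplex n x)
    (hstat : ∀ y : Elem n → ℝ, InSimplex n y →
      inner' n (fun i => y i - x i)
        (auxGrad n B f (fun z => Real.exp (α * (z - 1))) x) ≤ 0)
    (S : Finset (Elem n)) (hS : Feasible n B S) :
    (1 - Real.exp (-α)) * f S ≤ ME n B f x := by
  set y := indVec n B S
  have hpointwise : ∀ z ∈ Set.Icc (0 : ℝ) 1,
      Real.exp (α * (z - 1)) * (α * (f S - ME n B f (z • x)) - MEDeriv n B f (z • x) x) ≤
        Real.exp (α * (z - 1)) * MEDeriv n B f (z • x) (y - x) := by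
    intro z hz
    rw [map_sub]
    gcongr
    exact mul_sub_ME_le_MEDeriv_indVec hmono hα0.le hDR hS (hx.smul hz.1 hz.2)
  have hintegral := intervalIntegral.integral_mono_on (μ := MeasureTheory.volume) zero_le_one
    ((by fun_prop : Continuous _).intervalIntegrable 0 1)
    ((by fun_prop : Continuous _).intervalIntegrable 0 1) hpointwise
  rw [integral_exp_mul_sub_deriv α (f S) (hasDerivAt_ME_smul f x) (by fun_prop),
    ← inner'_auxGrad (by fun_prop)] at hintegral
  simp only [one_smul, zero_smul, ME_zero, hfempty, mul_zero, add_zero] at hintegral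
  exact sub_nonpos.1 (hintegral.trans (hstat y (indVec_inSimplex hS)))

theorem multinoulliExtension_auxStationary_dr {K : ℕ} (n B : Fin K → ℕ) (hn : ∀ k, 1 ≤ n k)
    (hB : ∀ k, 0 < B k) (hBn : ∀ k, B k ≤ n k)
    (f : Finset (Elem n) → ℝ) (hf0 : ∀ S, 0 ≤ f S)
    (hmono : MonotoneSet n f)
    (α : ℝ) (hα0 : 0 < α) (hα1 : α ≤ 1) (hDR : WeaklyDR n f α)
    (hfempty : f ∅ = 0)
    (x : Elem n → ℝ) (hx : InSimplex n x)
    (hstat : ∀ y : Elem n → ℝ, InSimplex n y →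
      inner' n (fun i => y i - x i)
        (auxGrad n B f (fun z => Real.exp (α * (z - 1))) x) ≤ 0)
    (S : Finset (Elem n)) (hS : Feasible n B S) :
    (1 - Real.exp (-α)) * f S ≤ ME n B f x :=
  multinoulliExtension_auxStationary_dr_general n B f hmono α hα0 hDR hfempty x hx hstat S hS

end Multinoulli
end
end

section
/- If the set function f : 2^V → ℝ≥0 is monotone and β-weakly submodular from above for some β ≥ 1, then for every point x = (p_1,…,p_K) ∈ ∏_{k=1}^K Δ_{n_k}, one has ⟨ x, ∇F(x) ⟩ ≤ β·F(x). In particular, if f is monotone and α-weakly DR-submodular for some α ∈ (0,1], then ⟨ x, ∇F(x) ⟩ ≤ (1/α)·F(x) for every x ∈ ∏_{k=1}^K Δ_{n_k}. -/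
/-!
Differentiating the product of the multinoulli probabilities and pairing with `x`, the
contribution of a sampling slot `s` to `⟨x, ∇F(x)⟩` turns out to be `E[f(R) - f(R₋ₛ)]`,
where `R` is the union of all draws and `R₋ₛ` the union of the draws of the other slots.
Removing `s` changes `R` only when its draw `v` is drawn by no other slot, and then
`R₋ₛ = R \ {v}`; distinct such slots lose distinct elements. By monotonicity the sum over
slots is therefore at most `∑_{v ∈ R} f(v | R \ {v}) ≤ β (f(R) - f(∅)) ≤ β f(R)`.
Telescoping along `B \ A` shows that an `α`-weakly DR-submodular function is
`α⁻¹`-weakly submodular from above.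
-/

open Finset

noncomputable section

namespace Multinoulli

variable {K : ℕ}

section Picks

variable {ι α : Type*} [DecidableEq α]

def picks (c : ι → Option α) (A : Finset ι) : Finset α :=
  A.biUnion fun s => (c s).toFinset

variable {c : ι → Option α} {A : Finset ι} {s : ι}

lemma mem_picks {v : α} : v ∈ picks c A ↔ ∃ s ∈ A, c s = some v := by
  simp [picks]

lemma picks_congr {c' : ι → Option α} (h : ∀ s ∈ A, c s = c' s) : picks c A = picks c' A :=
  biUnion_congr rfl fun s hs => by rw [h s hs]

lemma picks_erase_of_eq_none [DecidableEq ι] (h : c s = none) :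
    picks c (A.erase s) = picks c A := by
  ext v
  simp only [mem_picks, mem_erase]
  exact ⟨fun ⟨t, ⟨_, ht⟩, hv⟩ => ⟨t, ht, hv⟩,
    fun ⟨t, ht, hv⟩ => ⟨t, ⟨fun hts => by simp [hts ▸ h] at hv, ht⟩, hv⟩⟩

lemma picks_eq_insert_erase [DecidableEq ι] {v : α} (hs : s ∈ A) (h : c s = some v) :
    picks c A = insert v (picks c (A.erase s)) := by
  conv_lhs => rw [← insert_erase hs]
  simp [picks, biUnion_insert, h]

lemma sum_sub_picks_erase_le [Fintype ι] [DecidableEq ι] {f : Finset α → ℝ}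
    (hf : Monotone f) :
    ∑ s, (f (picks c univ) - f (picks c (univ.erase s)))
      ≤ ∑ v ∈ picks c univ, (f (picks c univ) - f ((picks c univ).erase v)) := by
  set R := picks c univ
  set T := univ.filter fun s => picks c (univ.erase s) ≠ R
  have essential : ∀ s ∈ T, ∃ v ∈ R, c s = some v ∧ v ∉ picks c (univ.erase s) ∧
      picks c (univ.erase s) = R.erase v := by
    intro s hs
    have hne := (mem_filter.1 hs).2
    obtain ⟨v, hv⟩ := Option.ne_none_iff_exists'.1 fun h => hne (picks_erase_of_eq_none h)
    have hR : R = insert v (picks c (univ.erase s)) := picks_eq_insert_erase (mem_univ s) hv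
    have hvR : v ∉ picks c (univ.erase s) := fun hmem => hne (by rw [hR, insert_eq_of_mem hmem])
    exact ⟨v, hR ▸ mem_insert_self _ _, hv, hvR, by rw [hR, erase_insert hvR]⟩
  have hinj : Set.InjOn c T := by
    intro s hs t ht hst
    by_contra hne
    obtain ⟨v, -, hv, hvs, -⟩ := essential s hs
    exact hvs (mem_picks.2 ⟨t, mem_erase.2 ⟨Ne.symm hne, mem_univ t⟩, hst ▸ hv⟩)
  let g : Option α → ℝ := fun o => o.elim 0 fun v => f R - f (R.erase v)
  calc ∑ s, (f R - f (picks c (univ.erase s)))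
      = ∑ s ∈ T, (f R - f (picks c (univ.erase s))) :=
        (sum_filter_of_ne fun s _ h => by contrapose! h; rw [h, sub_self]).symm
    _ = ∑ o ∈ T.image c, g o := by
        rw [sum_image hinj]
        refine sum_congr rfl fun s hs => ?_
        obtain ⟨v, -, hv, -, hR⟩ := essential s hs
        simp [g, hv, hR]
    _ ≤ ∑ o ∈ R.map .some, g o := by
        refine sum_le_sum_of_subset_of_nonneg ?_ ?_
        · intro o ho
          obtain ⟨s, hs, rfl⟩ := mem_image.1 ho
          obtain ⟨v, hvR, hv, -⟩ := essential s hs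
          exact mem_map.2 ⟨v, hvR, hv.symm⟩
        · intro o ho _
          obtain ⟨v, -, rfl⟩ := mem_map.1 ho
          exact sub_nonneg.2 (hf (erase_subset v R))
    _ = ∑ v ∈ R, (f R - f (R.erase v)) := sum_map _ _ _

end Picks

lemma sum_mul_apply_eq_of_update_invariant {ι : Type*} [Fintype ι] [DecidableEq ι]
    {β : ι → Type*} [∀ i, Fintype (β i)] (i : ι) {h : (∀ j, β j) → ℝ}
    (hh : ∀ e o, h (Function.update e i o) = h e) {φ ψ : β i → ℝ}
    (hφψ : ∑ o, φ o = ∑ o, ψ o) :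
    ∑ e, h e * φ (e i) = ∑ e, h e * ψ (e i) := by
  let E := Equiv.piSplitAt i β
  have factor : ∀ φ : β i → ℝ,
      ∑ e, h e * φ (e i) = ∑ o, φ o * ∑ r, h (E.symm (o, r)) := by
    intro φ
    rw [← E.symm.sum_comp, Fintype.sum_prod_type]
    simp [E, mul_sum, mul_comm]
  have hconst : ∀ o o' r, h (E.symm (o, r)) = h (E.symm (o', r)) := by
    intro o o' r
    rw [← hh (E.symm (o', r)) o]
    congr 1
    funext j
    by_cases hj : j = i
    · subst hj; simp [E]
    · simp [E, hj]
  rcases isEmpty_or_nonempty (β i) with _ | ⟨⟨o₀⟩⟩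
  · simp [factor]
  · simp only [factor, hconst _ o₀, ← sum_mul, hφψ]

variable {n B : Fin K → ℕ}

def probLin (n : Fin K → ℕ) (k : Fin K) : Option (Fin (n k)) → (Elem n → ℝ) →L[ℝ] ℝ
  | some m => ContinuousLinearMap.proj ⟨k, m⟩
  | none => -∑ m, ContinuousLinearMap.proj ⟨k, m⟩

lemma prob_eq_ite_add_probLin (x : Elem n → ℝ) (k : Fin K) (o : Option (Fin (n k))) :
    prob n x k o = (if o = none then 1 else 0) + probLin n k o x := by
  cases o <;> simp [prob, probLin, sub_eq_add_neg]

lemma sum_prob_eq_one (x : Elem n → ℝ) (k : Fin K) : ∑ o, prob n x k o = 1 := by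
  simp [Fintype.sum_option, prob]

lemma hasDerivAt_prob_update (x : Elem n → ℝ) (i : Elem n) (k : Fin K)
    (o : Option (Fin (n k))) (t : ℝ) :
    HasDerivAt (fun t => prob n (Function.update x i t) k o) (probLin n k o (Pi.single i 1)) t := by
  simp only [prob_eq_ite_add_probLin]
  exact ((probLin n k o).hasFDerivAt.comp_hasDerivAt t (hasDerivAt_update x i t)).const_add _

lemma sum_mul_probLin_single (x : Elem n → ℝ) (k : Fin K) (o : Option (Fin (n k))) :
    ∑ i, x i * probLin n k o (Pi.single i 1) = probLin n k o x := by
  conv_rhs => rw [← Finset.univ_sum_single x, map_sum]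
  refine sum_congr rfl fun i _ => ?_
  rw [← smul_eq_mul, ← map_smul, ← Pi.single_smul, smul_eq_mul, mul_one]

def jointProbErase (x : Elem n → ℝ) (s : Slot B) (e : Choice n B) : ℝ :=
  ∏ s' ∈ univ.erase s, prob n x s'.1 (e s')

lemma jointProbErase_mul_prob (x : Elem n → ℝ) (s : Slot B) (e : Choice n B) :
    jointProbErase x s e * prob n x s.1 (e s) = jointProb n B x e :=
  prod_erase_mul _ _ (mem_univ s)

lemma jointProbErase_update (x : Elem n → ℝ) (s : Slot B) (e : Choice n B)
    (o : Option (Fin (n s.1))) :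
    jointProbErase x s (Function.update e s o) = jointProbErase x s e :=
  prod_congr rfl fun _ hs' => by rw [Function.update_of_ne (ne_of_mem_erase hs')]

lemma hasDerivAt_jointProb_update (x : Elem n → ℝ) (i : Elem n) (e : Choice n B) :
    HasDerivAt (fun t => jointProb n B (Function.update x i t) e)
      (∑ s, jointProbErase x s e * probLin n s.1 (e s) (Pi.single i 1)) (x i) := by
  simpa [jointProb, jointProbErase, Function.update_eq_self] using
    HasDerivAt.fun_finsetProd (u := univ) fun s _ => hasDerivAt_prob_update x i s.1 (e s) (x i)

lemma pderiv_ME_s14 (f : Finset (Elem n) → ℝ) (x : Elem n → ℝ) (i : Elem n) :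
    pderiv n (ME n B f) i x = ∑ e, f (chosen n B e univ) *
      ∑ s, jointProbErase x s e * probLin n s.1 (e s) (Pi.single i 1) :=
  (HasDerivAt.fun_sum fun e _ =>
    (hasDerivAt_jointProb_update x i e).const_mul (f (chosen n B e univ))).deriv

lemma inner_grad_ME_eq_sum_probLin (f : Finset (Elem n) → ℝ) (x : Elem n → ℝ) :
    inner' n x (grad n (ME n B f) x) =
      ∑ s, ∑ e, f (chosen n B e univ) * (jointProbErase x s e * probLin n s.1 (e s) x) := by
  simp only [inner', grad, pderiv_ME_s14, ← sum_mul_probLin_single x, mul_sum]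
  rw [sum_comm]
  refine (sum_congr rfl fun e _ => sum_comm).trans ?_
  rw [sum_comm]
  exact sum_congr rfl fun s _ => sum_congr rfl fun e _ => sum_congr rfl fun i _ => by ring

lemma chosen_eq_picks (e : Choice n B) (A : Finset (Slot B)) :
    chosen n B e A = picks (fun s => (e s).map fun m => (⟨s.1, m⟩ : Elem n)) A :=
  rfl

/- On `e s = none` the set `R` equals `R₋ₛ`; since `f(R₋ₛ)` and the weight of the other slots
ignore the draw of `s`, that indicator may be replaced by `prob`, which also sums to `1`. -/
lemma sum_chosen_mul_jointProbErase_none (f : Finset (Elem n) → ℝ) (x : Elem n → ℝ)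
    (s : Slot B) :
    ∑ e, f (chosen n B e univ) * (jointProbErase x s e * if e s = none then 1 else 0)
      = ∑ e, f (chosen n B e (univ.erase s)) * jointProb n B x e := by
  have hinv : ∀ (e : Choice n B) o, f (chosen n B (Function.update e s o) (univ.erase s)) *
      jointProbErase x s (Function.update e s o) =
        f (chosen n B e (univ.erase s)) * jointProbErase x s e := by
    intro e o
    rw [jointProbErase_update, chosen_eq_picks, chosen_eq_picks,
      picks_congr fun t ht => by rw [Function.update_of_ne (ne_of_mem_erase ht)]]
  have hnone :
      ∑ o : Option (Fin (n s.1)), (if o = none then 1 else 0) = ∑ o, prob n x s.1 o := by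
    rw [sum_prob_eq_one]
    simp
  calc _ = ∑ e, f (chosen n B e (univ.erase s)) * jointProbErase x s e *
          if e s = none then 1 else 0 := by
        refine sum_congr rfl fun e _ => ?_
        split_ifs with h
        · rw [chosen_eq_picks, chosen_eq_picks, picks_erase_of_eq_none (by simp [h]), mul_assoc]
        · simp
    _ = ∑ e, f (chosen n B e (univ.erase s)) * jointProbErase x s e * prob n x s.1 (e s) :=
        sum_mul_apply_eq_of_update_invariant (β := fun s => Option (Fin (n s.1))) s hinv hnone
    _ = _ := by simp only [mul_assoc, jointProbErase_mul_prob]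

lemma inner_grad_ME (f : Finset (Elem n) → ℝ) (x : Elem n → ℝ) :
    inner' n x (grad n (ME n B f) x) = ∑ e, jointProb n B x e *
      ∑ s, (f (chosen n B e univ) - f (chosen n B e (univ.erase s))) := by
  rw [inner_grad_ME_eq_sum_probLin]
  calc _ = ∑ s, (∑ e, f (chosen n B e univ) * jointProb n B x e -
          ∑ e, f (chosen n B e univ) * (jointProbErase x s e * if e s = none then 1 else 0)) := by
        refine sum_congr rfl fun s _ => ?_
        rw [← sum_sub_distrib]
        refine sum_congr rfl fun e _ => ?_
        rw [← jointProbErase_mul_prob x s e, prob_eq_ite_add_probLin]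
        ring
    _ = ∑ s, ∑ e, jointProb n B x e *
          (f (chosen n B e univ) - f (chosen n B e (univ.erase s))) := by
        simp only [sum_chosen_mul_jointProbErase_none, ← sum_sub_distrib, mul_sub]
        simp only [mul_comm]
    _ = _ := by simp only [mul_sum]; exact sum_comm

lemma sum_sub_chosen_erase_le {f : Finset (Elem n) → ℝ} (hf : MonotoneSet n f)
    (e : Choice n B) :
    ∑ s, (f (chosen n B e univ) - f (chosen n B e (univ.erase s)))
      ≤ ∑ v ∈ chosen n B e univ, (f (chosen n B e univ) - f ((chosen n B e univ).erase v)) :=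
  sum_sub_picks_erase_le fun A A' h => hf A A' h

lemma WeaklyAbove.sum_sub_erase_le {f : Finset (Elem n) → ℝ} {β : ℝ}
    (hf : WeaklyAbove n f β) (hβ : 0 ≤ β) (hf0 : 0 ≤ f ∅) (R : Finset (Elem n)) :
    ∑ v ∈ R, (f R - f (R.erase v)) ≤ β * f R := by
  have h := hf ∅ R (empty_subset R)
  rw [sdiff_empty] at h
  calc ∑ v ∈ R, (f R - f (R.erase v)) = ∑ v ∈ R, marg n f v (R.erase v) :=
        sum_congr rfl fun v hv => by rw [marg, insert_erase hv]
    _ ≤ β * (f R - f ∅) := h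
    _ ≤ β * f R := mul_le_mul_of_nonneg_left (sub_le_self _ hf0) hβ

lemma WeaklyDR.weaklyAbove_inv {f : Finset (Elem n) → ℝ} {α : ℝ} (hf : WeaklyDR n f α)
    (hα : 0 < α) : WeaklyAbove n f α⁻¹ := by
  suffices h : ∀ D A R : Finset (Elem n), A ⊆ R → R \ A = D →
      α * ∑ v ∈ D, marg n f v (R.erase v) ≤ f R - f A by
    intro A R hAR
    rw [← div_eq_inv_mul, le_div_iff₀' hα]
    exact h _ A R hAR rfl
  intro D
  induction D using Finset.induction_on with
  | empty =>
    intro A R hAR hD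
    simp [hAR.antisymm (sdiff_eq_empty_iff_subset.1 hD)]
  | @insert a D ha ih =>
    intro A R hAR hD
    obtain ⟨haR, haA⟩ := mem_sdiff.1 (hD ▸ mem_insert_self a D)
    have hstep : α * marg n f a (R.erase a) ≤ f (insert a A) - f A :=
      hf A (R.erase a) (subset_erase.2 ⟨hAR, haA⟩) a (notMem_erase a R)
    have hrest := ih (insert a A) R (insert_subset haR hAR)
      (by rw [sdiff_insert, hD, erase_insert ha])
    rw [sum_insert ha, mul_add]
    linarith

theorem multinoulliExtension_inner_self_bound_general {K : ℕ} (n B : Fin K → ℕ)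
    (f : Finset (Elem n) → ℝ) (hf0 : ∀ S, 0 ≤ f S)
    (hmono : MonotoneSet n f)
    (x : Elem n → ℝ) (hx : InSimplex n x) :
    (∀ β : ℝ, 1 ≤ β → WeaklyAbove n f β →
      inner' n x (grad n (ME n B f) x) ≤ β * ME n B f x) ∧
    (∀ α : ℝ, 0 < α → α ≤ 1 → WeaklyDR n f α →
      inner' n x (grad n (ME n B f) x) ≤ α⁻¹ * ME n B f x) := by
  have above : ∀ β : ℝ, 1 ≤ β → WeaklyAbove n f β →
      inner' n x (grad n (ME n B f) x) ≤ β * ME n B f x := by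
    intro β hβ hf
    rw [inner_grad_ME, ME, mul_sum]
    refine sum_le_sum fun e _ => ?_
    have hP := jointProb_nonneg (B := B) hx e
    calc _ ≤ jointProb n B x e * (β * f (chosen n B e univ)) :=
          mul_le_mul_of_nonneg_left ((sum_sub_chosen_erase_le hmono e).trans
            (hf.sum_sub_erase_le (by linarith) (hf0 ∅) _)) hP
      _ = _ := by ring
  exact ⟨above, fun α hα hα1 hf =>
    above α⁻¹ ((one_le_inv₀ hα).2 hα1) (hf.weaklyAbove_inv hα)⟩

theorem multinoulliExtension_inner_self_bound {K : ℕ} (n B : Fin K → ℕ) (hn : ∀ k, 1 ≤ n k)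
    (hB : ∀ k, 0 < B k) (hBn : ∀ k, B k ≤ n k)
    (f : Finset (Elem n) → ℝ) (hf0 : ∀ S, 0 ≤ f S)
    (hmono : MonotoneSet n f)
    (x : Elem n → ℝ) (hx : InSimplex n x) :
    (∀ β : ℝ, 1 ≤ β → WeaklyAbove n f β →
      inner' n x (grad n (ME n B f) x) ≤ β * ME n B f x) ∧
    (∀ α : ℝ, 0 < α → α ≤ 1 → WeaklyDR n f α →
      inner' n x (grad n (ME n B f) x) ≤ α⁻¹ * ME n B f x) :=
  multinoulliExtension_inner_self_bound_general n B f hf0 hmono x hx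

end Multinoulli
end
end

section
/- If the set function f : 2^V → ℝ≥0 is monotone, then for every input (p_1,…,p_K) ∈ ∏_{k=1}^K Δ_{n_k}, the random subset S produced by the rounding-without-replacement procedure satisfies: (i) |S ∩ V_k| = B_k for every k ∈ {1,…,K} almost surely, and (ii) E[f(S)] ≥ F(p_1,…,p_K), where F is the Multinoulli Extension of f evaluated at the original input (p_1,…,p_K). -/
open Finset

noncomputable section

namespace Multinoulli

variable {K : ℕ}

/-- Normalisation step of the rounding procedure: divide by the (positive) total mass,
or replace by the uniform vector if the mass is zero. -/
def normVec (c : ℕ) (p : Fin c → ℝ) : Fin c → ℝ :=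
  if 0 < ∑ m, p m then (fun m => p m / ∑ m', p m') else fun _ => (c : ℝ)⁻¹

/-- The number `‖p‖₀` of nonzero coordinates. -/
def suppCard (c : ℕ) (p : Fin c → ℝ) : ℕ := (Finset.univ.filter fun m => p m ≠ 0).card

/-- Probability that the within-community rounding procedure produces the ordered
without-replacement selection `σ`: the first `Bm` draws pick a not-yet-selected
element `v` with probability `q v / (1 - Σ q over already selected)`, and the
remaining draws are uniform over the not-yet-selected elements. -/
def roundProb (c Bk : ℕ) (q : Fin c → ℝ) (Bm : ℕ) (σ : Fin Bk ↪ Fin c) : ℝ :=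
  ∏ j : Fin Bk,
    if (j : ℕ) < Bm then
      q (σ j) / (1 - ∑ l ∈ Finset.univ.filter (fun l : Fin Bk => (l : ℕ) < (j : ℕ)), q (σ l))
    else ((c : ℝ) - (j : ℕ))⁻¹

/-- The subset output by the rounding procedure on the joint outcome `σ`. -/
def roundSet (n B : Fin K → ℕ) (σ : ∀ k : Fin K, Fin (B k) ↪ Fin (n k)) : Finset (Elem n) :=
  Finset.univ.filter fun i : Elem n => ∃ b : Fin (B i.1), σ i.1 b = i.2

/-- Probability of the joint rounding outcome `σ`: the communities are processed
independently, each with its normalised prior and `B_min^k = min(‖p_k‖₀, B_k)`. -/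
def roundJointProb (n B : Fin K → ℕ) (x : Elem n → ℝ)
    (σ : ∀ k : Fin K, Fin (B k) ↪ Fin (n k)) : ℝ :=
  ∏ k : Fin K,
    roundProb (n k) (B k) (normVec (n k) fun m => x ⟨k, m⟩)
      (min (suppCard (n k) (normVec (n k) fun m => x ⟨k, m⟩)) (B k)) (σ k)

section Community

variable {c : ℕ}

def qsum (q : Fin c → ℝ) (T : Finset (Fin c)) : ℝ := ∑ m ∈ T, q m

def supp (q : Fin c → ℝ) : Finset (Fin c) := univ.filter fun m => q m ≠ 0

def Rrec (q : Fin c → ℝ) (g : Finset (Fin c) → ℝ) : ℕ → ℕ → Finset (Fin c) → ℝ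
  | _, 0, T => g T
  | w, b+1, T => ∑ m ∈ Tᶜ,
      (if 0 < w then q m / (1 - qsum q T) else ((c:ℝ) - T.card)⁻¹) *
        Rrec q g (w-1) b (insert m T)

def Wrec (p : Fin c → ℝ) (g : Finset (Fin c) → ℝ) : ℕ → Finset (Fin c) → ℝ
  | 0, T => g T
  | b+1, T => (1 - ∑ m, p m) * Wrec p g b T + ∑ m, p m * Wrec p g b (insert m T)

variable {q : Fin c → ℝ} {g : Finset (Fin c) → ℝ}

lemma qsum_nonneg (hq0 : ∀ m, 0 ≤ q m) (T : Finset (Fin c)) : 0 ≤ qsum q T :=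
  Finset.sum_nonneg fun m _ => hq0 m

lemma qsum_le_one (hq0 : ∀ m, 0 ≤ q m) (hq1 : ∑ m, q m = 1) (T : Finset (Fin c)) :
    qsum q T ≤ 1 := by
  rw [← hq1]
  exact Finset.sum_le_sum_of_subset_of_nonneg (subset_univ T) fun m _ _ => hq0 m

lemma qsum_lt_one (hq0 : ∀ m, 0 ≤ q m) (hq1 : ∑ m, q m = 1) {T : Finset (Fin c)}
    (h : (supp q \ T).Nonempty) : qsum q T < 1 := by
  obtain ⟨m₀, hm₀⟩ := h
  rw [Finset.mem_sdiff, supp, Finset.mem_filter] at hm₀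
  have hq₀ : 0 < q m₀ := lt_of_le_of_ne (hq0 m₀) (Ne.symm hm₀.1.2)
  have hsub : T ⊆ univ.erase m₀ := fun a ha =>
    Finset.mem_erase.2 ⟨fun h => hm₀.2 (h ▸ ha), mem_univ a⟩
  have : qsum q T ≤ ∑ m ∈ univ.erase m₀, q m :=
    Finset.sum_le_sum_of_subset_of_nonneg hsub fun m _ _ => hq0 m
  have he : ∑ m ∈ univ.erase m₀, q m = 1 - q m₀ := by
    rw [← hq1]
    rw [Finset.sum_erase_eq_sub (mem_univ m₀)]
  linarith

lemma Rrec_nonneg (hq0 : ∀ m, 0 ≤ q m) (hq1 : ∑ m, q m = 1) (hg0 : ∀ A, 0 ≤ g A) :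
    ∀ (b w : ℕ) (T : Finset (Fin c)), 0 ≤ Rrec q g w b T := by
  intro b
  induction b with
  | zero => intro w T; exact hg0 T
  | succ b ih =>
    intro w T
    apply Finset.sum_nonneg
    intro m _
    apply mul_nonneg _ (ih _ _)
    split
    · apply div_nonneg (hq0 m)
      have := qsum_le_one hq0 hq1 T
      linarith
    · apply inv_nonneg.2
      have : (T.card : ℝ) ≤ c := by
        have := Finset.card_le_univ T
        simp only [Finset.card_univ, Fintype.card_fin] at this
        exact_mod_cast this
      linarith

lemma Rrec_ge (hq0 : ∀ m, 0 ≤ q m) (hq1 : ∑ m, q m = 1) (hg0 : ∀ A, 0 ≤ g A)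
    (hgm : ∀ A B : Finset (Fin c), A ⊆ B → g A ≤ g B) :
    ∀ (b w : ℕ) (T : Finset (Fin c)), w ≤ (supp q \ T).card →
      (w < b → (supp q \ T).card ≤ w) → T.card + b ≤ c →
      g T ≤ Rrec q g w b T := by
  intro b
  induction b with
  | zero => intro w T _ _ _; exact le_refl _
  | succ b ih =>
    intro w T hw hwb hcb
    rw [Rrec]
    rcases Nat.eq_zero_or_pos w with hw0 | hwpos
    · -- uniform step
      subst hw0
      have hsupp : supp q ⊆ T := by
        have h0 : (supp q \ T).card ≤ 0 := hwb (Nat.succ_pos b)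
        rw [Nat.le_zero, Finset.card_eq_zero, Finset.sdiff_eq_empty_iff_subset] at h0
        exact h0
      have hTc : T.card < c := by omega
      have hcard : (Tᶜ : Finset (Fin c)).card = c - T.card := by
        rw [Finset.card_compl, Fintype.card_fin]
      have hne : ((c:ℝ) - T.card) ≠ 0 := by
        have : (T.card : ℝ) < c := by exact_mod_cast hTc
        linarith
      simp only [if_neg (lt_irrefl 0)]
      have hsum1 : ∑ m ∈ Tᶜ, ((c:ℝ) - T.card)⁻¹ = 1 := by
        rw [Finset.sum_const, hcard, nsmul_eq_mul]
        rw [Nat.cast_sub hTc.le]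
        field_simp
      calc g T = ∑ m ∈ Tᶜ, ((c:ℝ) - T.card)⁻¹ * g T := by
            rw [← Finset.sum_mul, hsum1, one_mul]
        _ ≤ _ := by
            apply Finset.sum_le_sum
            intro m hm
            have hmT : m ∉ T := by simpa using hm
            have hinv : (0:ℝ) ≤ ((c:ℝ) - T.card)⁻¹ := by
              apply inv_nonneg.2
              have : (T.card : ℝ) < c := by exact_mod_cast hTc
              linarith
            apply mul_le_mul_of_nonneg_left _ hinv
            have h1 : g T ≤ g (insert m T) := hgm _ _ (Finset.subset_insert m T)
            refine h1.trans (ih 0 (insert m T) (Nat.zero_le _) ?_ ?_)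
            · intro hb
              have : supp q \ insert m T = ∅ := by
                rw [Finset.sdiff_eq_empty_iff_subset]
                exact hsupp.trans (Finset.subset_insert m T)
              simp [this]
            · rw [Finset.card_insert_of_notMem hmT]; omega
    · -- weighted step
      have hne : (supp q \ T).Nonempty := by
        rw [← Finset.card_pos]; omega
      have hQ : qsum q T < 1 := qsum_lt_one hq0 hq1 hne
      have hQ0 : 0 ≤ qsum q T := qsum_nonneg hq0 T
      have hQne : (1 - qsum q T) ≠ 0 := by linarith
      simp only [if_pos hwpos]
      have hsumc : ∑ m ∈ Tᶜ, q m = 1 - qsum q T := by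
        have := Finset.sum_add_sum_compl T q
        rw [hq1] at this
        unfold qsum
        linarith
      have hsum1 : ∑ m ∈ Tᶜ, q m / (1 - qsum q T) = 1 := by
        rw [← Finset.sum_div, hsumc, div_self hQne]
      calc g T = ∑ m ∈ Tᶜ, (q m / (1 - qsum q T)) * g T := by
            rw [← Finset.sum_mul, hsum1, one_mul]
        _ ≤ _ := by
            apply Finset.sum_le_sum
            intro m hm
            have hmT : m ∉ T := by simpa using hm
            rcases eq_or_ne (q m) 0 with hqm | hqm
            · simp [hqm]
            · have hw0 : 0 ≤ q m / (1 - qsum q T) := by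
                apply div_nonneg (hq0 m); linarith
              apply mul_le_mul_of_nonneg_left _ hw0
              have hmem : m ∈ supp q \ T := by
                rw [Finset.mem_sdiff, supp, Finset.mem_filter]
                exact ⟨⟨mem_univ m, hqm⟩, hmT⟩
              have hcards : (supp q \ insert m T).card = (supp q \ T).card - 1 := by
                have : supp q \ insert m T = (supp q \ T).erase m := by
                  ext a
                  simp only [Finset.mem_sdiff, Finset.mem_insert, Finset.mem_erase]
                  tauto
                rw [this, Finset.card_erase_of_mem hmem]
              have h1 : g T ≤ g (insert m T) := hgm _ _ (Finset.subset_insert m T)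
              refine h1.trans (ih (w-1) (insert m T) ?_ ?_ ?_)
              · omega
              · intro hlt
                have : (supp q \ T).card ≤ w := by
                  rcases Nat.lt_or_ge w (b+1) with h | h
                  · exact hwb h
                  · omega
                omega
              · rw [Finset.card_insert_of_notMem hmT]; omega


lemma Wrec_le_Rrec (hq0 : ∀ m, 0 ≤ q m) (hq1 : ∑ m, q m = 1) {s : ℝ}
    (hs0 : 0 ≤ s) (hs1 : s ≤ 1) (hg0 : ∀ A, 0 ≤ g A)
    (hgm : ∀ A B : Finset (Fin c), A ⊆ B → g A ≤ g B) :
    ∀ (b w bR : ℕ) (T : Finset (Fin c)), b ≤ bR → w ≤ (supp q \ T).card →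
      (w < bR → (supp q \ T).card ≤ w) → T.card + bR ≤ c →
      Wrec (fun m => s * q m) g b T ≤ Rrec q g w bR T := by
  intro b
  induction b with
  | zero =>
    intro w bR T _ hw hwb hcb
    exact Rrec_ge hq0 hq1 hg0 hgm bR w T hw hwb hcb
  | succ b ih =>
    intro w bR T hb hw hwb hcb
    obtain ⟨bR', rfl⟩ : ∃ bR', bR = bR' + 1 := ⟨bR - 1, by omega⟩
    have hQ0 : 0 ≤ qsum q T := qsum_nonneg hq0 T
    have hQ1 : qsum q T ≤ 1 := qsum_le_one hq0 hq1 T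
    -- decompose the W step
    have hsplit : Wrec (fun m => s * q m) g (b+1) T =
        (1 - s * (1 - qsum q T)) * Wrec (fun m => s * q m) g b T +
          ∑ m ∈ Tᶜ, s * q m * Wrec (fun m => s * q m) g b (insert m T) := by
      rw [Wrec]
      rw [← Finset.sum_add_sum_compl T (fun m => s * q m * Wrec (fun m => s * q m) g b (insert m T))]
      have h1 : ∀ m ∈ T, s * q m * Wrec (fun m => s * q m) g b (insert m T)
          = s * q m * Wrec (fun m => s * q m) g b T := by
        intro m hm
        rw [Finset.insert_eq_self.2 hm]
      rw [Finset.sum_congr rfl h1]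
      have h2 : ∑ m, s * q m = s := by rw [← Finset.mul_sum, hq1, mul_one]
      have h3 : ∑ m ∈ T, s * q m * Wrec (fun m => s * q m) g b T
          = s * qsum q T * Wrec (fun m => s * q m) g b T := by
        rw [← Finset.sum_mul]; congr 1; rw [qsum, Finset.mul_sum]
      rw [h2, h3]; ring
    rw [hsplit]
    have hcoef0 : 0 ≤ 1 - s * (1 - qsum q T) := by nlinarith
    have hIH1 : Wrec (fun m => s * q m) g b T ≤ Rrec q g w (bR'+1) T :=
      ih w (bR'+1) T (by omega) hw hwb hcb
    rcases Nat.eq_zero_or_pos w with hw0 | hwpos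
    · -- w = 0 : no support left outside T
      subst hw0
      have hsupp : supp q ⊆ T := by
        have h0 : (supp q \ T).card ≤ 0 := hwb (Nat.succ_pos bR')
        rw [Nat.le_zero, Finset.card_eq_zero, Finset.sdiff_eq_empty_iff_subset] at h0
        exact h0
      have hz : ∀ m ∈ Tᶜ, s * q m * Wrec (fun m => s * q m) g b (insert m T) = 0 := by
        intro m hm
        have hmT : m ∉ T := by simpa using hm
        have : q m = 0 := by
          by_contra hne
          exact hmT (hsupp (by rw [supp, Finset.mem_filter]; exact ⟨mem_univ m, hne⟩))
        simp [this]
      rw [Finset.sum_eq_zero hz, add_zero]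
      have hR0 : 0 ≤ Rrec q g 0 (bR'+1) T := Rrec_nonneg hq0 hq1 hg0 _ _ _
      have hcoef1 : 1 - s * (1 - qsum q T) ≤ 1 := by nlinarith
      calc (1 - s * (1 - qsum q T)) * Wrec (fun m => s * q m) g b T
          ≤ (1 - s * (1 - qsum q T)) * Rrec q g 0 (bR'+1) T :=
            mul_le_mul_of_nonneg_left hIH1 hcoef0
        _ ≤ 1 * Rrec q g 0 (bR'+1) T := mul_le_mul_of_nonneg_right hcoef1 hR0
        _ = _ := one_mul _
    · -- w ≥ 1 : weighted step
      have hne : (supp q \ T).Nonempty := by rw [← Finset.card_pos]; omega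
      have hQlt : qsum q T < 1 := qsum_lt_one hq0 hq1 hne
      have hQne : (1 - qsum q T) ≠ 0 := by linarith
      have hRdef : Rrec q g w (bR'+1) T =
          ∑ m ∈ Tᶜ, (q m / (1 - qsum q T)) * Rrec q g (w-1) bR' (insert m T) := by
        rw [Rrec]; simp only [if_pos hwpos]
      -- termwise bound on the second sum
      have hterm : ∑ m ∈ Tᶜ, s * q m * Wrec (fun m => s * q m) g b (insert m T)
          ≤ ∑ m ∈ Tᶜ, s * q m * Rrec q g (w-1) bR' (insert m T) := by
        apply Finset.sum_le_sum
        intro m hm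
        have hmT : m ∉ T := by simpa using hm
        rcases eq_or_ne (q m) 0 with hqm | hqm
        · simp [hqm]
        · have hmem : m ∈ supp q \ T := by
            rw [Finset.mem_sdiff, supp, Finset.mem_filter]
            exact ⟨⟨mem_univ m, hqm⟩, hmT⟩
          have hcards : (supp q \ insert m T).card = (supp q \ T).card - 1 := by
            have : supp q \ insert m T = (supp q \ T).erase m := by
              ext a
              simp only [Finset.mem_sdiff, Finset.mem_insert, Finset.mem_erase]
              tauto
            rw [this, Finset.card_erase_of_mem hmem]
          have hIH2 : Wrec (fun m => s * q m) g b (insert m T) ≤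
              Rrec q g (w-1) bR' (insert m T) := by
            apply ih (w-1) bR' (insert m T) (by omega)
            · omega
            · intro hlt
              have : (supp q \ T).card ≤ w := by
                rcases Nat.lt_or_ge w (bR'+1) with h | h
                · exact hwb h
                · omega
              omega
            · rw [Finset.card_insert_of_notMem hmT]; omega
          exact mul_le_mul_of_nonneg_left hIH2 (mul_nonneg hs0 (hq0 m))
      -- the R-sum with plain weights
      have hsumR : ∑ m ∈ Tᶜ, q m * Rrec q g (w-1) bR' (insert m T)
          = (1 - qsum q T) * Rrec q g w (bR'+1) T := by
        rw [hRdef, Finset.mul_sum]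
        apply Finset.sum_congr rfl
        intro m _
        field_simp
      calc (1 - s * (1 - qsum q T)) * Wrec (fun m => s * q m) g b T +
            ∑ m ∈ Tᶜ, s * q m * Wrec (fun m => s * q m) g b (insert m T)
          ≤ (1 - s * (1 - qsum q T)) * Rrec q g w (bR'+1) T +
            ∑ m ∈ Tᶜ, s * q m * Rrec q g (w-1) bR' (insert m T) := by
            exact add_le_add (mul_le_mul_of_nonneg_left hIH1 hcoef0) hterm
        _ = (1 - s * (1 - qsum q T)) * Rrec q g w (bR'+1) T +
            s * ((1 - qsum q T) * Rrec q g w (bR'+1) T) := by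
            rw [← hsumR, Finset.mul_sum]
            congr 1
            apply Finset.sum_congr rfl
            intro m _
            ring
        _ = Rrec q g w (bR'+1) T := by ring


/-- option-outcome probability -/
def pr (p : Fin c → ℝ) : Option (Fin c) → ℝ
  | some m => p m
  | none => 1 - ∑ m, p m

/-- set of realized elements of a tuple of optional draws -/
def oset {b : ℕ} (e : Fin b → Option (Fin c)) : Finset (Fin c) :=
  univ.biUnion fun j => (e j).toFinset

lemma biUnion_univ_succ {α : Type*} [DecidableEq α] {b : ℕ} (F : Fin (b+1) → Finset α) :
    univ.biUnion F = F 0 ∪ univ.biUnion (fun j : Fin b => F j.succ) := by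
  ext a
  simp only [Finset.mem_biUnion, mem_univ, true_and, Finset.mem_union]
  constructor
  · rintro ⟨i, hi⟩
    rcases Fin.eq_zero_or_eq_succ i with rfl | ⟨j, rfl⟩
    · exact Or.inl hi
    · exact Or.inr ⟨j, hi⟩
  · rintro (h | ⟨j, hj⟩)
    · exact ⟨0, h⟩
    · exact ⟨j.succ, hj⟩

lemma oset_cons {b : ℕ} (o : Option (Fin c)) (e : Fin b → Option (Fin c)) :
    oset (Fin.cons o e) = o.toFinset ∪ oset e := by
  unfold oset
  rw [biUnion_univ_succ (fun j => ((Fin.cons o e : Fin (b+1) → Option (Fin c)) j).toFinset)]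
  simp [Fin.cons_succ]

lemma conv_W (p : Fin c → ℝ) (g : Finset (Fin c) → ℝ) :
    ∀ (b : ℕ) (T : Finset (Fin c)),
      ∑ e : Fin b → Option (Fin c), (∏ j, pr p (e j)) * g (T ∪ oset e) = Wrec p g b T := by
  intro b
  induction b with
  | zero =>
    intro T
    have hu : (univ : Finset (Fin 0 → Option (Fin c))) = {fun j => j.elim0} :=
      Finset.eq_singleton_iff_unique_mem.2 ⟨mem_univ _, fun e _ => funext fun j => j.elim0⟩
    rw [hu, Finset.sum_singleton]
    simp [oset, Wrec]
  | succ b ih =>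
    intro T
    rw [← Equiv.sum_comp (Fin.consEquiv (fun _ : Fin (b+1) => Option (Fin c)))
      (fun e => (∏ j, pr p (e j)) * g (T ∪ oset e)), Fintype.sum_prod_type]
    have hstep : ∀ (o : Option (Fin c)) (e : Fin b → Option (Fin c)),
        (∏ j, pr p ((Fin.cons o e : Fin (b+1) → Option (Fin c)) j)) *
          g (T ∪ oset (Fin.cons o e : Fin (b+1) → Option (Fin c)))
        = pr p o * ((∏ j, pr p (e j)) * g ((T ∪ o.toFinset) ∪ oset e)) := by
      intro o e
      rw [Fin.prod_univ_succ, oset_cons]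
      simp only [Fin.cons_zero, Fin.cons_succ]
      rw [Finset.union_assoc]
      ring
    calc ∑ o : Option (Fin c), ∑ e : Fin b → Option (Fin c),
          (∏ j, pr p ((Fin.cons o e : Fin (b+1) → Option (Fin c)) j)) *
            g (T ∪ oset (Fin.cons o e : Fin (b+1) → Option (Fin c)))
        = ∑ o : Option (Fin c), pr p o * Wrec p g b (T ∪ o.toFinset) := by
          apply Finset.sum_congr rfl
          intro o _
          rw [Finset.sum_congr rfl (fun e _ => hstep o e), ← Finset.mul_sum, ih]
      _ = Wrec p g (b+1) T := by
          rw [univ_option, Finset.sum_insertNone]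
          simp only [Option.toFinset_none, Option.toFinset_some, Finset.union_empty]
          rw [Wrec]
          congr 1
          apply Finset.sum_congr rfl
          intro m _
          rw [Finset.union_comm, ← Finset.insert_eq]
          rfl


/-- weight of an ordered selection (as a plain function, with an injectivity
and avoidance indicator), generalising `roundProb` to a nonempty initial set. -/
def esw (q : Fin c → ℝ) (w : ℕ) (T : Finset (Fin c)) {b : ℕ} (σ : Fin b → Fin c) : ℝ :=
  (if Function.Injective σ ∧ ∀ j, σ j ∉ T then (1:ℝ) else 0) *
  ∏ j : Fin b,
    (if (j:ℕ) < w then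
      q (σ j) / (1 - qsum q T - ∑ l ∈ univ.filter (fun l : Fin b => (l:ℕ) < (j:ℕ)), q (σ l))
    else ((c:ℝ) - T.card - (j:ℕ))⁻¹)

lemma esw_cons (q : Fin c → ℝ) (w : ℕ) (T : Finset (Fin c)) {b : ℕ} (m : Fin c)
    (σ : Fin b → Fin c) :
    esw q w T (Fin.cons m σ : Fin (b+1) → Fin c) =
      (if m ∈ Tᶜ then (1:ℝ) else 0) *
      ((if 0 < w then q m / (1 - qsum q T) else ((c:ℝ) - T.card)⁻¹) *
        esw q (w-1) (insert m T) σ) := by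
  by_cases hm : m ∈ T
  · rw [if_neg (by simpa using hm), zero_mul]
    unfold esw
    rw [if_neg, zero_mul]
    rintro ⟨-, havoid⟩
    exact absurd hm (by simpa using havoid 0)
  · rw [if_pos (by simpa using hm), one_mul]
    unfold esw
    have hind : (if Function.Injective (Fin.cons m σ : Fin (b+1) → Fin c) ∧
          (∀ j : Fin (b+1), (Fin.cons m σ : Fin (b+1) → Fin c) j ∉ T) then (1:ℝ) else 0)
        = (if Function.Injective σ ∧ ∀ j, σ j ∉ insert m T then (1:ℝ) else 0) := by
      congr 1
      apply propext
      rw [Fin.cons_injective_iff]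
      constructor
      · rintro ⟨⟨hrange, hinj⟩, havoid⟩
        refine ⟨hinj, fun j => ?_⟩
        rw [Finset.mem_insert]
        push_neg
        exact ⟨fun h => hrange ⟨j, h⟩, by simpa using havoid j.succ⟩
      · rintro ⟨hinj, havoid⟩
        have h' : ∀ j, σ j ≠ m ∧ σ j ∉ T := by
          intro j
          have := havoid j
          rw [Finset.mem_insert] at this
          push_neg at this
          exact this
        refine ⟨⟨fun ⟨j, hj⟩ => (h' j).1 hj, hinj⟩, fun j => ?_⟩
        rcases Fin.eq_zero_or_eq_succ j with rfl | ⟨j', rfl⟩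
        · simpa using hm
        · simpa using (h' j').2
    rw [hind]
    have hqins : qsum q (insert m T) = q m + qsum q T := by
      rw [qsum, qsum, Finset.sum_insert hm]
    have hcins : ((insert m T).card : ℝ) = T.card + 1 := by
      rw [Finset.card_insert_of_notMem hm]; push_cast; ring
    rw [Fin.prod_univ_succ]
    have h0 : (if ((0 : Fin (b+1)) : ℕ) < w then
          q ((Fin.cons m σ : Fin (b+1) → Fin c) 0) /
            (1 - qsum q T - ∑ l ∈ univ.filter (fun l : Fin (b+1) => (l:ℕ) < ((0 : Fin (b+1)):ℕ)), q ((Fin.cons m σ : Fin (b+1) → Fin c) l))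
        else ((c:ℝ) - T.card - ((0 : Fin (b+1)):ℕ))⁻¹)
        = (if 0 < w then q m / (1 - qsum q T) else ((c:ℝ) - T.card)⁻¹) := by
      have hfilt : univ.filter (fun l : Fin (b+1) => (l:ℕ) < ((0 : Fin (b+1)):ℕ)) = ∅ := by
        apply Finset.filter_false_of_mem
        intro l _
        simp
      rw [hfilt]
      simp
    rw [h0]
    have hprod : ∀ j : Fin b,
        (if ((j.succ : Fin (b+1)) : ℕ) < w then
          q ((Fin.cons m σ : Fin (b+1) → Fin c) j.succ) /
            (1 - qsum q T - ∑ l ∈ univ.filter (fun l : Fin (b+1) => (l:ℕ) < ((j.succ : Fin (b+1)):ℕ)), q ((Fin.cons m σ : Fin (b+1) → Fin c) l))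
        else ((c:ℝ) - T.card - ((j.succ : Fin (b+1)):ℕ))⁻¹)
        = (if (j:ℕ) < w - 1 then
            q (σ j) / (1 - qsum q (insert m T) - ∑ l ∈ univ.filter (fun l : Fin b => (l:ℕ) < (j:ℕ)), q (σ l))
          else ((c:ℝ) - (insert m T).card - (j:ℕ))⁻¹) := by
      intro j
      have hiff : (((j.succ : Fin (b+1)) : ℕ) < w) ↔ ((j:ℕ) < w - 1) := by
        rw [Fin.val_succ]; omega
      have hsum : ∑ l ∈ univ.filter (fun l : Fin (b+1) => (l:ℕ) < ((j.succ : Fin (b+1)):ℕ)), q ((Fin.cons m σ : Fin (b+1) → Fin c) l)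
          = q m + ∑ l ∈ univ.filter (fun l : Fin b => (l:ℕ) < (j:ℕ)), q (σ l) := by
        rw [Finset.sum_filter, Finset.sum_filter, Fin.sum_univ_succ]
        simp only [Fin.cons_zero, Fin.cons_succ, Fin.val_succ, Fin.val_zero]
        rw [if_pos (Nat.succ_pos _)]
        congr 1
        apply Finset.sum_congr rfl
        intro l _
        congr 1
        apply propext
        omega
      refine if_congr hiff ?_ ?_
      · rw [Fin.cons_succ, hsum, hqins]
        ring_nf
      · rw [Fin.val_succ, hcins]
        push_cast
        ring_nf
    rw [Finset.prod_congr rfl (fun j _ => hprod j)]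
    ring

lemma conv_R (q : Fin c → ℝ) (g : Finset (Fin c) → ℝ) :
    ∀ (b w : ℕ) (T : Finset (Fin c)),
      ∑ σ : Fin b → Fin c, esw q w T σ * g (T ∪ univ.image σ) = Rrec q g w b T := by
  intro b
  induction b with
  | zero =>
    intro w T
    have hu : (univ : Finset (Fin 0 → Fin c)) = {fun j => j.elim0} :=
      Finset.eq_singleton_iff_unique_mem.2 ⟨mem_univ _, fun e _ => funext fun j => j.elim0⟩
    rw [hu, Finset.sum_singleton]
    have h1 : esw q w T (fun j : Fin 0 => j.elim0) = 1 := by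
      unfold esw
      rw [if_pos ⟨fun a => a.elim0, fun j => j.elim0⟩]
      simp
    rw [h1]
    simp [Rrec]
  | succ b ih =>
    intro w T
    rw [← Equiv.sum_comp (Fin.consEquiv (fun _ : Fin (b+1) => Fin c))
      (fun σ => esw q w T σ * g (T ∪ univ.image σ)), Fintype.sum_prod_type]
    have himg : ∀ (m : Fin c) (σ : Fin b → Fin c),
        univ.image (Fin.cons m σ : Fin (b+1) → Fin c) = insert m (univ.image σ) := by
      intro m σ
      ext a
      simp only [Finset.mem_image, mem_univ, true_and, Finset.mem_insert]
      constructor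
      · rintro ⟨j, hj⟩
        rcases Fin.eq_zero_or_eq_succ j with rfl | ⟨j', rfl⟩
        · left; rw [← hj]; rfl
        · right; exact ⟨j', by rw [← hj]; rw [Fin.cons_succ]⟩
      · rintro (rfl | ⟨j', hj⟩)
        · exact ⟨0, rfl⟩
        · exact ⟨j'.succ, by rw [Fin.cons_succ]; exact hj⟩
    have hstep : ∀ (m : Fin c) (σ : Fin b → Fin c),
        esw q w T (Fin.cons m σ : Fin (b+1) → Fin c) *
          g (T ∪ univ.image (Fin.cons m σ : Fin (b+1) → Fin c))
        = (if m ∈ Tᶜ then (1:ℝ) else 0) *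
          ((if 0 < w then q m / (1 - qsum q T) else ((c:ℝ) - T.card)⁻¹) *
            (esw q (w-1) (insert m T) σ * g (insert m T ∪ univ.image σ))) := by
      intro m σ
      rw [esw_cons, himg]
      have : T ∪ insert m (univ.image σ) = insert m T ∪ univ.image σ := by
        rw [Finset.union_insert, Finset.insert_union]
      rw [this]
      ring
    calc ∑ m : Fin c, ∑ σ : Fin b → Fin c,
          esw q w T (Fin.cons m σ : Fin (b+1) → Fin c) *
            g (T ∪ univ.image (Fin.cons m σ : Fin (b+1) → Fin c))
        = ∑ m : Fin c, (if m ∈ Tᶜ then (1:ℝ) else 0) *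
            ((if 0 < w then q m / (1 - qsum q T) else ((c:ℝ) - T.card)⁻¹) *
              Rrec q g (w-1) b (insert m T)) := by
          apply Finset.sum_congr rfl
          intro m _
          rw [Finset.sum_congr rfl (fun σ _ => hstep m σ), ← Finset.mul_sum, ← Finset.mul_sum, ih]
      _ = Rrec q g w (b+1) T := by
          rw [Rrec]
          simp only [ite_mul, one_mul, zero_mul, ← Finset.sum_filter,
            Finset.filter_mem_eq_inter, Finset.univ_inter]

lemma emb_to_fun_sum {b : ℕ} (F : (Fin b → Fin c) → ℝ)
    (hF : ∀ f, ¬ Function.Injective f → F f = 0) :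
    ∑ σ : Fin b ↪ Fin c, F ⇑σ = ∑ f : Fin b → Fin c, F f := by
  rw [← Finset.sum_subset (Finset.filter_subset (fun f => Function.Injective f) univ)
      (fun f _ hf => hF f (by simpa using hf))]
  apply Finset.sum_bij (i := fun (σ : Fin b ↪ Fin c) _ => ⇑σ)
  · intro σ _
    simp [σ.injective]
  · intro σ1 _ σ2 _ h
    exact Function.Embedding.coe_injective h
  · intro f hf
    exact ⟨⟨f, (Finset.mem_filter.1 hf).2⟩, mem_univ _, rfl⟩
  · intro σ _
    rfl

lemma emb_sum (q : Fin c → ℝ) (w b : ℕ) (g : Finset (Fin c) → ℝ) :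
    ∑ σ : Fin b ↪ Fin c, roundProb c b q w σ * g (univ.image ⇑σ) =
      Rrec q g w b ∅ := by
  rw [← conv_R q g b w ∅]
  rw [← emb_to_fun_sum (fun f => esw q w ∅ f * g (∅ ∪ univ.image f))]
  · apply Finset.sum_congr rfl
    intro σ _
    rw [Finset.empty_union]
    congr 1
    unfold esw roundProb
    rw [if_pos ⟨σ.injective, fun j => Finset.notMem_empty _⟩, one_mul]
    apply Finset.prod_congr rfl
    intro j _
    have h1 : qsum q (∅ : Finset (Fin c)) = 0 := by simp [qsum]
    have h2 : ((∅ : Finset (Fin c)).card : ℝ) = 0 := by simp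
    rw [h1, h2]
    ring_nf
  · intro f hf
    unfold esw
    rw [if_neg, zero_mul, zero_mul]
    rintro ⟨hinj, -⟩
    exact hf hinj

lemma normVec_nonneg (p : Fin c → ℝ) (hp0 : ∀ m, 0 ≤ p m) (m : Fin c) :
    0 ≤ normVec c p m := by
  unfold normVec
  split
  · exact div_nonneg (hp0 m) (by positivity)
  · positivity

lemma normVec_sum (hc : 1 ≤ c) (p : Fin c → ℝ) (hp0 : ∀ m, 0 ≤ p m) :
    ∑ m, normVec c p m = 1 := by
  unfold normVec
  split
  · rename_i h
    rw [← Finset.sum_div, div_self (ne_of_gt h)]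
  · rw [Finset.sum_const, Finset.card_univ, Fintype.card_fin, nsmul_eq_mul]
    rw [mul_inv_cancel₀]
    have : (0:ℝ) < c := by exact_mod_cast hc
    exact ne_of_gt this

lemma normVec_scale (p : Fin c → ℝ) (hp0 : ∀ m, 0 ≤ p m) (hp1 : ∑ m, p m ≤ 1) :
    ∃ s : ℝ, 0 ≤ s ∧ s ≤ 1 ∧ p = fun m => s * normVec c p m := by
  unfold normVec
  by_cases h : 0 < ∑ m, p m
  · refine ⟨∑ m, p m, le_of_lt h, hp1, ?_⟩
    rw [if_pos h]
    funext m
    field_simp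
  · have hz : ∀ m, p m = 0 := by
      have h0 : ∑ m, p m = 0 :=
        le_antisymm (not_lt.1 h) (Finset.sum_nonneg fun m _ => hp0 m)
      intro m
      exact (Finset.sum_eq_zero_iff_of_nonneg fun m _ => hp0 m).1 h0 m (mem_univ m)
    refine ⟨0, le_refl _, zero_le_one, ?_⟩
    funext m
    rw [hz m, zero_mul]

lemma community_dom (hc : 1 ≤ c) {Bk : ℕ} (hBc : Bk ≤ c)
    (p : Fin c → ℝ) (hp0 : ∀ m, 0 ≤ p m) (hp1 : ∑ m, p m ≤ 1)
    (g : Finset (Fin c) → ℝ) (hg0 : ∀ A, 0 ≤ g A)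
    (hgm : ∀ A B : Finset (Fin c), A ⊆ B → g A ≤ g B) :
    ∑ e : Fin Bk → Option (Fin c), (∏ j, pr p (e j)) * g (oset e) ≤
      ∑ σ : Fin Bk ↪ Fin c,
        roundProb c Bk (normVec c p) (min (suppCard c (normVec c p)) Bk) σ *
          g (univ.image ⇑σ) := by
  set q := normVec c p with hq
  have hq0 : ∀ m, 0 ≤ q m := normVec_nonneg p hp0
  have hq1 : ∑ m, q m = 1 := normVec_sum hc p hp0
  obtain ⟨s, hs0, hs1, hps⟩ := normVec_scale p hp0 hp1
  have hsupp : suppCard c q = (supp q).card := rfl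
  have hL : ∑ e : Fin Bk → Option (Fin c), (∏ j, pr p (e j)) * g (oset e)
      = Wrec p g Bk ∅ := by
    rw [← conv_W p g Bk ∅]
    apply Finset.sum_congr rfl
    intro e _
    rw [Finset.empty_union]
  rw [hL, emb_sum q (min (suppCard c q) Bk) Bk g, hps]
  apply Wrec_le_Rrec hq0 hq1 hs0 hs1 hg0 hgm
  · exact le_refl _
  · rw [Finset.sdiff_empty, ← hsupp]
    exact Nat.min_le_left _ _
  · intro hlt
    rw [Finset.sdiff_empty, ← hsupp]
    omega
  · simpa using hBc

lemma roundProb_nonneg {Bk : ℕ} (hBc : Bk ≤ c) (q : Fin c → ℝ)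
    (hq0 : ∀ m, 0 ≤ q m) (hq1 : ∑ m, q m = 1) (w : ℕ) (σ : Fin Bk ↪ Fin c) :
    0 ≤ roundProb c Bk q w σ := by
  unfold roundProb
  apply Finset.prod_nonneg
  intro j _
  split
  · apply div_nonneg (hq0 _)
    have himg : ∑ l ∈ univ.filter (fun l : Fin Bk => (l:ℕ) < (j:ℕ)), q (σ l)
        = ∑ m ∈ (univ.filter (fun l : Fin Bk => (l:ℕ) < (j:ℕ))).image ⇑σ, q m :=
      (Finset.sum_image (fun a _ b _ h => σ.injective h)).symm
    have hle : ∑ l ∈ univ.filter (fun l : Fin Bk => (l:ℕ) < (j:ℕ)), q (σ l) ≤ 1 := by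
      rw [himg, ← hq1]
      exact Finset.sum_le_sum_of_subset_of_nonneg (Finset.subset_univ _)
        fun m _ _ => hq0 m
    linarith
  · apply inv_nonneg.2
    have : ((j:ℕ):ℝ) < c := by exact_mod_cast lt_of_lt_of_le j.2 hBc
    linarith

end Community

section Tensorize

lemma tensorize {β : Type*} [DecidableEq β] :
    ∀ (k : ℕ) (A C : Fin k → Type) [∀ i, Fintype (A i)] [∀ i, Fintype (C i)]
      (u : ∀ i, A i → ℝ) (v : ∀ i, C i → ℝ)
      (S : ∀ i, A i → Finset β) (Tt : ∀ i, C i → Finset β),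
      (∀ i a, 0 ≤ u i a) → (∀ i a, 0 ≤ v i a) →
      (∀ i (g : Finset β → ℝ), (∀ X, 0 ≤ g X) → (∀ X Y : Finset β, X ⊆ Y → g X ≤ g Y) →
        ∑ a, u i a * g (S i a) ≤ ∑ cc, v i cc * g (Tt i cc)) →
      ∀ (f : Finset β → ℝ), (∀ X, 0 ≤ f X) → (∀ X Y : Finset β, X ⊆ Y → f X ≤ f Y) →
      ∑ a : ∀ i, A i, (∏ i, u i (a i)) * f (univ.biUnion fun i => S i (a i)) ≤
        ∑ cc : ∀ i, C i, (∏ i, v i (cc i)) * f (univ.biUnion fun i => Tt i (cc i)) := by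
  intro k
  induction k with
  | zero =>
    intro A C _ _ u v S Tt hu0 hv0 hdom f hf0 hfm
    have hA : (univ : Finset (∀ i : Fin 0, A i)) = {fun i => i.elim0} :=
      Finset.eq_singleton_iff_unique_mem.2 ⟨mem_univ _, fun e _ => funext fun i => i.elim0⟩
    have hC : (univ : Finset (∀ i : Fin 0, C i)) = {fun i => i.elim0} :=
      Finset.eq_singleton_iff_unique_mem.2 ⟨mem_univ _, fun e _ => funext fun i => i.elim0⟩
    rw [hA, hC, Finset.sum_singleton, Finset.sum_singleton]
    simp
  | succ k ih =>
    intro A C _ _ u v S Tt hu0 hv0 hdom f hf0 hfm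
    -- split sums at index 0
    rw [← Equiv.sum_comp (Fin.consEquiv A)
      (fun a => (∏ i, u i (a i)) * f (univ.biUnion fun i => S i (a i))),
      ← Equiv.sum_comp (Fin.consEquiv C)
      (fun cc => (∏ i, v i (cc i)) * f (univ.biUnion fun i => Tt i (cc i))),
      Fintype.sum_prod_type, Fintype.sum_prod_type]
    -- the partial expectation over the remaining coordinates on the rounded side
    set Phi : Finset β → ℝ := fun X =>
      ∑ cc : ∀ i : Fin k, C i.succ, (∏ i, v i.succ (cc i)) *
        f (X ∪ univ.biUnion fun i => Tt i.succ (cc i)) with hPhi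
    have hPhi0 : ∀ X, 0 ≤ Phi X := by
      intro X
      apply Finset.sum_nonneg
      intro cc _
      exact mul_nonneg (Finset.prod_nonneg fun i _ => hv0 _ _) (hf0 _)
    have hPhimono : ∀ X Y : Finset β, X ⊆ Y → Phi X ≤ Phi Y := by
      intro X Y hXY
      apply Finset.sum_le_sum
      intro cc _
      apply mul_le_mul_of_nonneg_left _ (Finset.prod_nonneg fun i _ => hv0 _ _)
      exact hfm _ _ (Finset.union_subset_union_left hXY)
    have hsplitL : ∀ (a0 : A 0) (a' : ∀ i : Fin k, A i.succ),
        (∏ i, u i ((Fin.consEquiv A) (a0, a') i)) *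
          f (univ.biUnion fun i => S i ((Fin.consEquiv A) (a0, a') i))
        = u 0 a0 * ((∏ i, u i.succ (a' i)) *
            f (S 0 a0 ∪ univ.biUnion fun i => S i.succ (a' i))) := by
      intro a0 a'
      have h1 : ∀ i : Fin (k+1), (Fin.consEquiv A) (a0, a') i = Fin.cons a0 a' i := fun _ => rfl
      rw [Fin.prod_univ_succ]
      have h2 : (univ.biUnion fun i : Fin (k+1) => S i ((Fin.consEquiv A) (a0, a') i))
          = S 0 a0 ∪ univ.biUnion fun i : Fin k => S i.succ (a' i) := by
        rw [biUnion_univ_succ (fun i : Fin (k+1) => S i ((Fin.consEquiv A) (a0, a') i))]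
        simp only [h1, Fin.cons_zero, Fin.cons_succ]
      rw [h2]
      simp only [h1, Fin.cons_zero, Fin.cons_succ]
      ring
    have hsplitR : ∀ (c0 : C 0) (c' : ∀ i : Fin k, C i.succ),
        (∏ i, v i ((Fin.consEquiv C) (c0, c') i)) *
          f (univ.biUnion fun i => Tt i ((Fin.consEquiv C) (c0, c') i))
        = v 0 c0 * ((∏ i, v i.succ (c' i)) *
            f (Tt 0 c0 ∪ univ.biUnion fun i => Tt i.succ (c' i))) := by
      intro c0 c'
      have h1 : ∀ i : Fin (k+1), (Fin.consEquiv C) (c0, c') i = Fin.cons c0 c' i := fun _ => rfl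
      rw [Fin.prod_univ_succ]
      have h2 : (univ.biUnion fun i : Fin (k+1) => Tt i ((Fin.consEquiv C) (c0, c') i))
          = Tt 0 c0 ∪ univ.biUnion fun i : Fin k => Tt i.succ (c' i) := by
        rw [biUnion_univ_succ (fun i : Fin (k+1) => Tt i ((Fin.consEquiv C) (c0, c') i))]
        simp only [h1, Fin.cons_zero, Fin.cons_succ]
      rw [h2]
      simp only [h1, Fin.cons_zero, Fin.cons_succ]
      ring
    calc ∑ a0 : A 0, ∑ a' : ∀ i : Fin k, A i.succ,
          (∏ i, u i ((Fin.consEquiv A) (a0, a') i)) *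
            f (univ.biUnion fun i => S i ((Fin.consEquiv A) (a0, a') i))
        ≤ ∑ a0 : A 0, u 0 a0 * Phi (S 0 a0) := by
          apply Finset.sum_le_sum
          intro a0 _
          rw [Finset.sum_congr rfl (fun a' _ => hsplitL a0 a'), ← Finset.mul_sum]
          apply mul_le_mul_of_nonneg_left _ (hu0 0 a0)
          exact ih (fun i => A i.succ) (fun i => C i.succ)
            (fun i => u i.succ) (fun i => v i.succ)
            (fun i => S i.succ) (fun i => Tt i.succ)
            (fun i a => hu0 i.succ a) (fun i a => hv0 i.succ a)
            (fun i g hg0 hgm => hdom i.succ g hg0 hgm)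
            (fun Y => f (S 0 a0 ∪ Y)) (fun Y => hf0 _)
            (fun X Y hXY => hfm _ _ (Finset.union_subset_union_right hXY))
      _ ≤ ∑ c0 : C 0, v 0 c0 * Phi (Tt 0 c0) := hdom 0 Phi hPhi0 hPhimono
      _ = ∑ c0 : C 0, ∑ c' : ∀ i : Fin k, C i.succ,
          (∏ i, v i ((Fin.consEquiv C) (c0, c') i)) *
            f (univ.biUnion fun i => Tt i ((Fin.consEquiv C) (c0, c') i)) := by
          apply Finset.sum_congr rfl
          intro c0 _
          rw [Finset.sum_congr rfl (fun c' _ => hsplitR c0 c'), ← Finset.mul_sum, hPhi]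

end Tensorize

theorem multinoulliExtension_rounding_without_replacement {K : ℕ} (n B : Fin K → ℕ) (hn : ∀ k, 1 ≤ n k)
    (hB : ∀ k, 0 < B k) (hBn : ∀ k, B k ≤ n k)
    (f : Finset (Elem n) → ℝ) (hf0 : ∀ S, 0 ≤ f S)
    (hmono : MonotoneSet n f)
    (x : Elem n → ℝ) (hx : InSimplex n x) :
    (∀ σ : ∀ k : Fin K, Fin (B k) ↪ Fin (n k), ∀ k : Fin K,
        ((roundSet n B σ).filter fun i => i.1 = k).card = B k) ∧
    ME n B f x ≤
      ∑ σ : ∀ k : Fin K, Fin (B k) ↪ Fin (n k),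
        roundJointProb n B x σ * f (roundSet n B σ) := by
  constructor
  · -- part (i): every community contributes exactly `B k` elements
    intro σ k
    have hset : (roundSet n B σ).filter (fun i => i.1 = k) =
        (univ.image (σ k)).map ⟨Sigma.mk k, sigma_mk_injective⟩ := by
      ext i
      obtain ⟨k', m⟩ := i
      simp only [roundSet, Finset.mem_filter, Finset.mem_map, Finset.mem_image,
        mem_univ, true_and, Function.Embedding.coeFn_mk]
      constructor
      · rintro ⟨⟨b', hb'⟩, rfl⟩
        exact ⟨m, ⟨b', hb'⟩, rfl⟩
      · rintro ⟨m', ⟨b', hb'⟩, hmk⟩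
        obtain ⟨rfl, hm⟩ := Sigma.mk.inj_iff.1 hmk
        obtain rfl := eq_of_heq hm
        exact ⟨⟨b', hb'⟩, rfl⟩
    rw [hset, Finset.card_map, Finset.card_image_of_injective _ (σ k).injective,
      Finset.card_univ, Fintype.card_fin]
  · -- part (ii): the expectation only increases under the rounding
    set u : ∀ k : Fin K, (Fin (B k) → Option (Fin (n k))) → ℝ :=
      fun k e => ∏ b, pr (fun m => x ⟨k, m⟩) (e b) with hu
    set v : ∀ k : Fin K, (Fin (B k) ↪ Fin (n k)) → ℝ :=
      fun k σk => roundProb (n k) (B k) (normVec (n k) fun m => x ⟨k, m⟩)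
        (min (suppCard (n k) (normVec (n k) fun m => x ⟨k, m⟩)) (B k)) σk with hv
    set S : ∀ k : Fin K, (Fin (B k) → Option (Fin (n k))) → Finset (Elem n) :=
      fun k e => (oset e).image (fun m => (⟨k, m⟩ : Elem n)) with hS
    set Tt : ∀ k : Fin K, (Fin (B k) ↪ Fin (n k)) → Finset (Elem n) :=
      fun k σk => (univ.image ⇑σk).image (fun m => (⟨k, m⟩ : Elem n)) with hT
    have hprpr : ∀ (k : Fin K) (o : Option (Fin (n k))),
        prob n x k o = pr (fun m => x ⟨k, m⟩) o := by
      intro k o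
      cases o <;> rfl
    have hME : ME n B f x = ∑ ee : ∀ k, Fin (B k) → Option (Fin (n k)),
        (∏ k, u k (ee k)) * f (univ.biUnion fun k => S k (ee k)) := by
      unfold ME
      rw [← Equiv.sum_comp
        (Equiv.piCurry fun (k : Fin K) (b : Fin (B k)) => Option (Fin (n k))).symm
        (fun e => f (chosen n B e Finset.univ) * jointProb n B x e)]
      apply Finset.sum_congr rfl
      intro ee _
      rw [Equiv.piCurry_symm_apply]
      have hjp : jointProb n B x (Sigma.uncurry ee) = ∏ k, u k (ee k) := by
        unfold jointProb
        rw [← Finset.univ_sigma_univ, Finset.prod_sigma]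
        apply Finset.prod_congr rfl
        intro k _
        apply Finset.prod_congr rfl
        intro b _
        exact hprpr k (ee k b)
      have hch : chosen n B (Sigma.uncurry ee) Finset.univ
          = univ.biUnion fun k => S k (ee k) := by
        ext i
        obtain ⟨k', m⟩ := i
        simp only [chosen, hS, oset, Finset.mem_biUnion, mem_univ, true_and,
          Finset.mem_image, Option.mem_toFinset]
        constructor
        · rintro ⟨⟨k, b⟩, hmem⟩
          rw [Option.mem_map] at hmem
          obtain ⟨m', hm', hmk⟩ := hmem
          obtain ⟨rfl, hm⟩ := Sigma.mk.inj_iff.1 hmk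
          obtain rfl := eq_of_heq hm
          exact ⟨k, m', ⟨b, hm'⟩, rfl⟩
        · rintro ⟨k, m', ⟨b, hb⟩, hmk⟩
          refine ⟨⟨k, b⟩, ?_⟩
          rw [Option.mem_map]
          exact ⟨m', hb, hmk⟩
      rw [hjp, hch]
      ring
    have hRHS : (∑ σ : ∀ k : Fin K, Fin (B k) ↪ Fin (n k),
          roundJointProb n B x σ * f (roundSet n B σ))
        = ∑ σ : ∀ k : Fin K, Fin (B k) ↪ Fin (n k),
            (∏ k, v k (σ k)) * f (univ.biUnion fun k => Tt k (σ k)) := by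
      apply Finset.sum_congr rfl
      intro σ _
      have hrs : roundSet n B σ = univ.biUnion fun k => Tt k (σ k) := by
        ext i
        obtain ⟨k', m⟩ := i
        simp only [roundSet, hT, Finset.mem_filter, Finset.mem_biUnion, mem_univ,
          true_and, Finset.mem_image]
        constructor
        · rintro ⟨b, hb⟩
          exact ⟨k', m, ⟨b, hb⟩, rfl⟩
        · rintro ⟨k, m', ⟨b, hb⟩, hmk⟩
          obtain ⟨rfl, hm⟩ := Sigma.mk.inj_iff.1 hmk
          obtain rfl := eq_of_heq hm
          exact ⟨b, hb⟩
      rw [hrs]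
      rfl
    rw [hME, hRHS]
    apply tensorize K _ _ u v S Tt
    · intro k e
      apply Finset.prod_nonneg
      intro b _
      cases he : e b with
      | none =>
        have : pr (fun m => x ⟨k, m⟩) none = 1 - ∑ m : Fin (n k), x ⟨k, m⟩ := rfl
        rw [this]
        have := hx.2 k
        linarith
      | some m => exact hx.1 ⟨k, m⟩
    · intro k σk
      exact roundProb_nonneg (hBn k) _ (normVec_nonneg _ fun m => hx.1 ⟨k, m⟩)
        (normVec_sum (hn k) _ fun m => hx.1 ⟨k, m⟩) _ σk
    · intro k g hg0 hgm
      exact community_dom (hn k) (hBn k) (fun m => x ⟨k, m⟩)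
        (fun m => hx.1 ⟨k, m⟩) (hx.2 k)
        (fun X => g (X.image fun m => (⟨k, m⟩ : Elem n)))
        (fun X => hg0 _)
        (fun X Y hXY => hgm _ _ (Finset.image_subset_image hXY))
    · exact hf0
    · exact hmono


end Multinoulli
end
end
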